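/- arXiv:2302.03889 — 8 statements merged into one kernel-verified Lean document; each statement's English description precedes it below -/
import Mathlib

section
/- Assume the CFL condition 0 ≤ λL ≤ 1. If w, v : ℤ → ℝ are bounded sequences with w_i ≥ v_i for every i ∈ ℤ, then one step of the filtered scheme preserves the order: G(w)_i ≥ G(v)_i for every i ∈ ℤ. -/
open MeasureTheory

/-- Discrete averaging: `(discAvg I y) i = Σ_{j ≥ i} I_{j-i} y_j`. -/
noncomputable def discAvg (I : ℕ → ℝ) (y : ℤ → ℝ) (i : ℤ) : ℝ :=
  ∑' k : ℕ, I k * y (i + (k : ℤ))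

/-- One step of the filtered scheme:
`G(w)_i = w_i + λ Σ_{j ≥ i} I_{j-i} (W(w_{j+1}) - W(w_j))`. -/
noncomputable def schemeStep (I : ℕ → ℝ) (W : ℝ → ℝ) (lam : ℝ) (w : ℤ → ℝ) (i : ℤ) : ℝ :=
  w i + lam * ∑' k : ℕ, I k * (W (w (i + (k : ℤ) + 1)) - W (w (i + (k : ℤ))))

set_option maxHeartbeats 1000000 in
/-- under the CFL condition `0 ≤ λL ≤ 1`, one step of the filtered
scheme preserves the order of bounded sequences. -/
theorem stmt_0
    (Φ : ℝ → ℝ) (α Δz Δt lam L : ℝ)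
    (hα : 0 < α) (hΔz : 0 < Δz) (hΔt : 0 < Δt) (hlam : lam = Δt / Δz)
    (hΦnonneg : ∀ z : ℝ, 0 ≤ z → 0 ≤ Φ z)
    (hΦmono : ∀ x y : ℝ, 0 ≤ x → x ≤ y → Φ y ≤ Φ x)
    (hΦmass : ∫ ζ in Set.Ioi (0:ℝ), Φ ζ = 1)
    (hΦmom : IntegrableOn (fun ζ => ζ * Φ ζ) (Set.Ioi (0:ℝ)))
    (W : ℝ → ℝ) (hW : Differentiable ℝ W)
    (hW' : ∀ x : ℝ, 0 ≤ deriv W x ∧ deriv W x ≤ L)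
    (hCFL : 0 ≤ lam * L ∧ lam * L ≤ 1)
    (I : ℕ → ℝ)
    (hI : ∀ k : ℕ, I k = ∫ ζ in ((k : ℝ) * Δz)..(((k : ℝ) + 1) * Δz), (1/α) * Φ (ζ/α))
    (w v : ℤ → ℝ)
    (hwB : ∃ M, ∀ i, |w i| ≤ M) (hvB : ∃ M, ∀ i, |v i| ≤ M)
    (hord : ∀ i, v i ≤ w i) :
    ∀ i : ℤ, schemeStep I W lam v i ≤ schemeStep I W lam w i := by
  -- basic positivity facts
  have hL : 0 ≤ L := le_trans (hW' 0).1 (hW' 0).2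
  have hlam0 : 0 ≤ lam := by rw [hlam]; positivity
  -- the rescaled kernel
  set Ψ : ℝ → ℝ := fun ζ => (1/α) * Φ (ζ/α) with hΨdef
  have hΨnn : ∀ ζ : ℝ, 0 ≤ ζ → 0 ≤ Ψ ζ := by
    intro ζ hζ
    exact mul_nonneg (by positivity) (hΦnonneg _ (by positivity))
  have hΨanti : AntitoneOn Ψ (Set.Ici 0) := by
    intro x hx y hy hxy
    have hx0 : (0:ℝ) ≤ x := hx
    exact mul_le_mul_of_nonneg_left
      (hΦmono (x/α) (y/α) (div_nonneg hx0 hα.le)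
        (by gcongr)) (by positivity)
  have hΨii : ∀ a b : ℝ, 0 ≤ a → 0 ≤ b → IntervalIntegrable Ψ volume a b := by
    intro a b ha hb
    refine (hΨanti.mono ?_).intervalIntegrable
    intro x hx
    rcases Set.mem_uIcc.1 hx with ⟨h1, _⟩ | ⟨h1, _⟩
    · exact le_trans ha h1
    · exact le_trans hb h1
  -- total mass of Ψ is 1
  have hΨmass : ∫ ζ in Set.Ioi (0:ℝ), Ψ ζ = 1 := by
    have h1 : (∫ x in Set.Ioi (0:ℝ), Φ (α⁻¹ * x)) = α • ∫ x in Set.Ioi (0:ℝ), Φ x := by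
      simpa [inv_inv, mul_zero] using integral_comp_mul_left_Ioi Φ 0 (inv_pos.mpr hα)
    have : (∫ x in Set.Ioi (0:ℝ), Ψ x) = (1/α) * ∫ x in Set.Ioi (0:ℝ), Φ (α⁻¹ * x) := by
      rw [← integral_const_mul]
      congr 1 with x
      simp [hΨdef, div_eq_inv_mul, one_div]
    rw [this, h1, hΦmass]
    simp [smul_eq_mul]
    field_simp
  have hΨInt : IntegrableOn Ψ (Set.Ioi (0:ℝ)) := by
    by_contra h
    rw [integral_undef h] at hΨmass
    norm_num at hΨmass
  -- facts about I
  have hInn : ∀ k, 0 ≤ I k := by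
    intro k
    rw [hI k]
    apply intervalIntegral.integral_nonneg
    · nlinarith [hΔz]
    · intro u hu
      exact hΨnn u (le_trans (by positivity) hu.1)
  have hIanti : ∀ k, I (k + 1) ≤ I k := by
    intro k
    have hk0 : (0:ℝ) ≤ (k:ℝ) * Δz := by positivity
    have hk1 : (0:ℝ) ≤ ((k:ℝ) + 1) * Δz := by positivity
    have hle : (k:ℝ) * Δz ≤ ((k:ℝ) + 1) * Δz := by nlinarith
    have hshift : I (k + 1) = ∫ ζ in ((k:ℝ) * Δz)..(((k:ℝ) + 1) * Δz), Ψ (ζ + Δz) := by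
      rw [intervalIntegral.integral_comp_add_right Ψ Δz, hI (k + 1)]
      congr 1 <;> push_cast <;> ring
    rw [hshift, hI k]
    have hii1 : IntervalIntegrable (fun ζ => Ψ (ζ + Δz)) volume ((k:ℝ) * Δz) (((k:ℝ)+1) * Δz) := by
      apply AntitoneOn.intervalIntegrable
      intro x hx y hy hxy
      have hx0 : (0:ℝ) ≤ x := by
        rcases Set.mem_uIcc.1 hx with ⟨h1, _⟩ | ⟨h1, _⟩
        · exact le_trans hk0 h1
        · exact le_trans hk1 h1
      exact hΨanti (Set.mem_Ici.2 (by linarith)) (Set.mem_Ici.2 (by linarith))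
        (by linarith)
    refine intervalIntegral.integral_mono_on hle hii1 (hΨii _ _ hk0 hk1) ?_
    intro x hx
    exact hΨanti (Set.mem_Ici.2 (le_trans hk0 hx.1))
      (Set.mem_Ici.2 (le_trans (le_trans hk0 hx.1) (by linarith))) (by linarith)
  have hIpart : ∀ n, ∑ k ∈ Finset.range n, I k ≤ 1 := by
    intro n
    have hsum : ∑ k ∈ Finset.range n, I k = ∫ ζ in (0:ℝ)..((n:ℝ) * Δz), Ψ ζ := by
      have := intervalIntegral.sum_integral_adjacent_intervals
        (a := fun k : ℕ => (k:ℝ) * Δz) (n := n) (f := Ψ)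
        (fun k _ => by
          push_cast
          exact hΨii _ _ (by positivity) (by positivity))
      simp only [Nat.cast_zero, zero_mul] at this
      rw [← this]
      apply Finset.sum_congr rfl
      intro k _
      rw [hI k]
      congr 1 <;> push_cast <;> ring
    rw [hsum, intervalIntegral.integral_of_le (by positivity)]
    calc ∫ ζ in Set.Ioc (0:ℝ) ((n:ℝ) * Δz), Ψ ζ
        ≤ ∫ ζ in Set.Ioi (0:ℝ), Ψ ζ := by
          apply setIntegral_mono_set hΨInt
          · filter_upwards [ae_restrict_mem measurableSet_Ioi] with x hx
            exact hΨnn x (le_of_lt hx)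
          · exact HasSubset.Subset.eventuallyLE Set.Ioc_subset_Ioi_self
      _ = 1 := hΨmass
  have hIsum : Summable I := summable_of_sum_range_le hInn hIpart
  have hI0 : I 0 ≤ 1 := by simpa using hIpart 1
  -- facts about W
  have hWmono : Monotone W := monotone_of_deriv_nonneg hW fun x => (hW' x).1
  have hWlip : ∀ x y : ℝ, y ≤ x → W x - W y ≤ L * (x - y) := by
    intro x y hxy
    have hd : ∀ t : ℝ, deriv (fun t : ℝ => L * t - W t) t = L - deriv W t := by
      intro t
      have h1 : HasDerivAt (fun t : ℝ => L * t) L t := by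
        simpa using (hasDerivAt_id t).const_mul L
      exact (h1.sub (hW t).hasDerivAt).deriv
    have hg : Monotone (fun t => L * t - W t) := by
      apply monotone_of_deriv_nonneg
      · exact fun t => ((hW t).hasDerivAt.const_mul L |>.sub (hW t).hasDerivAt).differentiableAt |> fun _ => by
          exact ((differentiable_id.const_mul L).sub hW) t
      · intro t
        rw [hd t]
        linarith [(hW' t).2]
    have := hg hxy
    simp only at this
    linarith
  -- bounds on the sequences
  obtain ⟨Mw, hMw⟩ := hwB
  obtain ⟨Mv, hMv⟩ := hvB
  intro i
  set a : ℕ → ℝ := fun k => W (w (i + (k:ℤ))) - W (v (i + (k:ℤ))) with ha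
  have hann : ∀ k, 0 ≤ a k := fun k =>
    sub_nonneg.2 (hWmono (hord (i + (k:ℤ))))
  have habd : ∀ k, a k ≤ L * (Mw + Mv) := by
    intro k
    have h1 := hWlip (w (i + (k:ℤ))) (v (i + (k:ℤ))) (hord _)
    have h2 := abs_le.1 (hMw (i + (k:ℤ)))
    have h3 := abs_le.1 (hMv (i + (k:ℤ)))
    have : w (i + (k:ℤ)) - v (i + (k:ℤ)) ≤ Mw + Mv := by linarith
    calc a k ≤ L * (w (i + (k:ℤ)) - v (i + (k:ℤ))) := h1
      _ ≤ L * (Mw + Mv) := by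
          apply mul_le_mul_of_nonneg_left this hL
  -- summability helpers
  have hbdd : ∀ (u : ℤ → ℝ) (Mu : ℝ), (∀ j, |u j| ≤ Mu) →
      Summable (fun k : ℕ => I k * (W (u (i + (k:ℤ) + 1)) - W (u (i + (k:ℤ))))) := by
    intro u Mu hMu
    apply Summable.of_abs
    refine Summable.of_nonneg_of_le (f := fun k => I k * (L * (2 * Mu)))
      (fun k => abs_nonneg _) ?_ (hIsum.mul_right _)
    · intro k
      rw [abs_mul, abs_of_nonneg (hInn k)]
      apply mul_le_mul_of_nonneg_left _ (hInn k)
      rcases le_total (u (i + (k:ℤ))) (u (i + (k:ℤ) + 1)) with h | h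
      · rw [abs_of_nonneg (sub_nonneg.2 (hWmono h))]
        have := hWlip _ _ h
        have h2 := abs_le.1 (hMu (i + (k:ℤ) + 1))
        have h3 := abs_le.1 (hMu (i + (k:ℤ)))
        nlinarith
      · rw [abs_of_nonpos (sub_nonpos.2 (hWmono h))]
        have := hWlip _ _ h
        have h2 := abs_le.1 (hMu (i + (k:ℤ) + 1))
        have h3 := abs_le.1 (hMu (i + (k:ℤ)))
        nlinarith
  have hSw := hbdd w Mw hMw
  have hSv := hbdd v Mv hMv
  have hA0 : Summable (fun k : ℕ => I k * a k) :=
    Summable.of_nonneg_of_le (f := fun k => I k * (L * (Mw + Mv)))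
      (fun k => mul_nonneg (hInn k) (hann k))
      (fun k => mul_le_mul_of_nonneg_left (habd k) (hInn k)) (hIsum.mul_right _)
  have hA1 : Summable (fun k : ℕ => I k * a (k + 1)) :=
    Summable.of_nonneg_of_le (f := fun k => I k * (L * (Mw + Mv)))
      (fun k => mul_nonneg (hInn k) (hann (k+1)))
      (fun k => mul_le_mul_of_nonneg_left (habd (k+1)) (hInn k)) (hIsum.mul_right _)
  have hA0' : Summable (fun k : ℕ => I (k + 1) * a (k + 1)) :=
    (summable_nat_add_iff 1).2 hA0
  -- the key difference identity
  have hdiff :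
      (∑' k : ℕ, I k * (W (w (i + (k:ℤ) + 1)) - W (w (i + (k:ℤ))))) -
      (∑' k : ℕ, I k * (W (v (i + (k:ℤ) + 1)) - W (v (i + (k:ℤ))))) =
      (∑' k : ℕ, I k * a (k + 1)) - ∑' k : ℕ, I k * a k := by
    rw [← Summable.tsum_sub hSw hSv, ← Summable.tsum_sub hA1 hA0]
    apply tsum_congr
    intro k
    have hcast : i + (k:ℤ) + 1 = i + ((k + 1 : ℕ) : ℤ) := by push_cast; ring
    simp only [ha, hcast]
    ring
  -- the shifted sum lower bound
  have hshiftle : (∑' k : ℕ, I (k + 1) * a (k + 1)) ≤ ∑' k : ℕ, I k * a (k + 1) := by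
    apply Summable.tsum_le_tsum _ hA0' hA1
    intro k
    exact mul_le_mul_of_nonneg_right (hIanti k) (hann (k + 1))
  have hzeroadd : (∑' k : ℕ, I k * a k) = I 0 * a 0 + ∑' k : ℕ, I (k + 1) * a (k + 1) :=
    Summable.tsum_eq_zero_add hA0
  have hkey : (∑' k : ℕ, I k * a (k + 1)) - (∑' k : ℕ, I k * a k) ≥ -(I 0 * a 0) := by
    rw [hzeroadd]
    linarith
  -- put it together
  simp only [schemeStep]
  rw [← sub_nonneg]
  have hrw : w i + lam * (∑' k : ℕ, I k * (W (w (i + (k:ℤ) + 1)) - W (w (i + (k:ℤ))))) -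
      (v i + lam * (∑' k : ℕ, I k * (W (v (i + (k:ℤ) + 1)) - W (v (i + (k:ℤ)))))) =
      (w i - v i) + lam * ((∑' k : ℕ, I k * a (k + 1)) - ∑' k : ℕ, I k * a k) := by
    rw [← hdiff]; ring
  rw [hrw]
  have ha0 : a 0 = W (w i) - W (v i) := by simp [ha]
  have ha0le : a 0 ≤ L * (w i - v i) := by
    rw [ha0]
    exact hWlip _ _ (hord i)
  have ha0nn : 0 ≤ a 0 := hann 0
  have hd : 0 ≤ w i - v i := sub_nonneg.2 (hord i)
  have hstep : lam * (I 0 * a 0) ≤ w i - v i := by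
    calc lam * (I 0 * a 0) ≤ lam * (I 0 * (L * (w i - v i))) := by
          apply mul_le_mul_of_nonneg_left
            (mul_le_mul_of_nonneg_left ha0le (hInn 0)) hlam0
      _ ≤ lam * (1 * (L * (w i - v i))) := by
          apply mul_le_mul_of_nonneg_left _ hlam0
          apply mul_le_mul_of_nonneg_right hI0 (by positivity)
      _ = lam * L * (w i - v i) := by ring
      _ ≤ 1 * (w i - v i) := mul_le_mul_of_nonneg_right hCFL.2 hd
      _ = w i - v i := one_mul _
  have hlamterm : lam * ((∑' k : ℕ, I k * a (k + 1)) - ∑' k : ℕ, I k * a k) ≥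
      lam * (-(I 0 * a 0)) := mul_le_mul_of_nonneg_left hkey hlam0
  nlinarith [hlamterm, hstep]
end

section
/- Assume the CFL condition 0 ≤ λL ≤ 1. Let w⁰, v⁰ : ℤ → ℝ be bounded sequences with Σ_{i∈ℤ} |w⁰_i − v⁰_i| < ∞, and let w^{n+1} = G(w^n), v^{n+1} = G(v^n) be the scheme iterates. Then for every n ≥ 0 one has Σ_{i∈ℤ} |w^n_i − v^n_i| ≤ Σ_{i∈ℤ} |w⁰_i − v⁰_i| (in particular each difference is summable). -/
/-!
Write `d = u - v` and `a = W ∘ u - W ∘ v`. Summation by parts rewrites one step of the scheme as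
`G(u)_i - G(v)_i = (d_i - λ I₀ a_i) + λ ∑_k (I_k - I_{k+1}) a_{i+k+1}`.
Since `W` is nondecreasing and `L`-Lipschitz and `λ I₀ L ≤ 1`, the first term has absolute value
exactly `|d_i| - λ I₀ |a_i|`. Since `Φ` is nonincreasing, the weights `I_k - I_{k+1}` are
nonnegative, and they sum to `I₀`; so after summing over `i` the second term contributes at most
`λ I₀ ∑ |a|`, which is exactly what the first term lost.
-/

open MeasureTheory

open Set
open scoped NNReal

noncomputable def cellIntegral (Φ : ℝ → ℝ) (h : ℝ) (k : ℕ) : ℝ :=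
  ∫ ζ in (k : ℝ) * h..((k : ℝ) + 1) * h, Φ ζ

theorem AntitoneOn.intervalIntegrable_of_Ici {f : ℝ → ℝ} {c a b : ℝ}
    (hf : AntitoneOn f (Ici c)) (ha : c ≤ a) (hab : a ≤ b) : IntervalIntegrable f volume a b :=
  (hf.mono fun _ hx => ha.trans (uIcc_of_le hab ▸ hx).1).intervalIntegrable

namespace cellIntegral

variable {Φ : ℝ → ℝ} {h : ℝ}

theorem nonneg (hΦ : ∀ z, 0 ≤ z → 0 ≤ Φ z) (hh : 0 ≤ h) (k : ℕ) : 0 ≤ cellIntegral Φ h k :=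
  intervalIntegral.integral_nonneg (by nlinarith) fun _ hζ =>
    hΦ _ ((by positivity : (0 : ℝ) ≤ k * h).trans hζ.1)

theorem antitone (hΦ : AntitoneOn Φ (Ici 0)) (hh : 0 ≤ h) : Antitone (cellIntegral Φ h) := by
  refine antitone_nat_of_succ_le fun k => ?_
  have hk : (0 : ℝ) ≤ k * h := by positivity
  have hkh : (k : ℝ) * h ≤ (k + 1) * h := by nlinarith
  have hshift : cellIntegral Φ h (k + 1) = ∫ ζ in (k : ℝ) * h..(k + 1) * h, Φ (ζ + h) := by
    rw [intervalIntegral.integral_comp_add_right, cellIntegral]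
    push_cast
    congr 1 <;> ring
  have hint : IntervalIntegrable (fun ζ => Φ (ζ + h)) volume (k * h) ((k + 1) * h) := by
    simpa using (hΦ.intervalIntegrable_of_Ici (by linarith) (by linarith :
      k * h + h ≤ (k + 1) * h + h)).comp_add_right h
  rw [hshift, cellIntegral]
  refine intervalIntegral.integral_mono_on hkh hint (hΦ.intervalIntegrable_of_Ici hk hkh)
    fun ζ hζ => ?_
  have hζ₀ : 0 ≤ ζ := hk.trans hζ.1
  exact hΦ hζ₀ (mem_Ici.2 (by linarith)) (by linarith)

theorem sum_range (hΦ : AntitoneOn Φ (Ici 0)) (hh : 0 ≤ h) (n : ℕ) :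
    ∑ k ∈ Finset.range n, cellIntegral Φ h k = ∫ ζ in (0 : ℝ)..n * h, Φ ζ := by
  have := intervalIntegral.sum_integral_adjacent_intervals
    (a := fun k : ℕ => (k : ℝ) * h) (n := n) fun k _ =>
      hΦ.intervalIntegrable_of_Ici (by positivity) (by push_cast; nlinarith)
  simpa [cellIntegral] using this

theorem sum_range_le (hΦ₀ : ∀ z, 0 ≤ z → 0 ≤ Φ z) (hΦ : AntitoneOn Φ (Ici 0))
    (hint : IntegrableOn Φ (Ioi 0)) (hh : 0 ≤ h) (n : ℕ) :
    ∑ k ∈ Finset.range n, cellIntegral Φ h k ≤ ∫ ζ in Ioi 0, Φ ζ := by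
  rw [sum_range hΦ hh, intervalIntegral.integral_of_le (by positivity)]
  exact setIntegral_mono_set hint
    ((ae_restrict_mem measurableSet_Ioi).mono fun _ hx => hΦ₀ _ hx.le)
    Ioc_subset_Ioi_self.eventuallyLE

theorem summable (hΦ₀ : ∀ z, 0 ≤ z → 0 ≤ Φ z) (hΦ : AntitoneOn Φ (Ici 0))
    (hint : IntegrableOn Φ (Ioi 0)) (hh : 0 ≤ h) : Summable (cellIntegral Φ h) :=
  summable_of_sum_range_le (nonneg hΦ₀ hh) (sum_range_le hΦ₀ hΦ hint hh)

theorem apply_zero_le (hΦ₀ : ∀ z, 0 ≤ z → 0 ≤ Φ z) (hΦ : AntitoneOn Φ (Ici 0))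
    (hint : IntegrableOn Φ (Ioi 0)) (hh : 0 ≤ h) : cellIntegral Φ h 0 ≤ ∫ ζ in Ioi 0, Φ ζ := by
  simpa using sum_range_le hΦ₀ hΦ hint hh 1

end cellIntegral

theorem intervalIntegral_comp_div_eq_cellIntegral (Φ : ℝ → ℝ) {α : ℝ} (hα : 0 < α) (h : ℝ)
    (k : ℕ) :
    ∫ ζ in (k : ℝ) * h..((k : ℝ) + 1) * h, (1 / α) * Φ (ζ / α) = cellIntegral Φ (h / α) k := by
  rw [intervalIntegral.integral_const_mul, intervalIntegral.integral_comp_div Φ hα.ne',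
    smul_eq_mul, ← mul_assoc, one_div_mul_cancel hα.ne', one_mul, cellIntegral, mul_div_assoc,
    mul_div_assoc]

section Weights

variable {c : ℕ → ℝ}

theorem summable_mul_of_abs_le (hc₀ : ∀ k, 0 ≤ c k) (hc : Summable c) {f : ℕ → ℝ} {B : ℝ}
    (hf : ∀ k, |f k| ≤ B) : Summable fun k => c k * f k :=
  hc.mul_right B |>.of_norm_bounded fun k => by
    rw [Real.norm_eq_abs, abs_mul, abs_of_nonneg (hc₀ k)]
    exact mul_le_mul_of_nonneg_left (hf k) (hc₀ k)

theorem abs_tsum_mul_le_tsum_mul_abs (hc₀ : ∀ k, 0 ≤ c k) (hc : Summable c) {f : ℕ → ℝ}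
    {B : ℝ} (hf : ∀ k, |f k| ≤ B) : |∑' k, c k * f k| ≤ ∑' k, c k * |f k| := by
  have habs : Summable fun k => ‖c k * f k‖ := by
    simpa only [Real.norm_eq_abs, abs_mul, abs_of_nonneg (hc₀ _)] using
      summable_mul_of_abs_le hc₀ hc fun k => (abs_abs (f k)).trans_le (hf k)
  simpa only [Real.norm_eq_abs, abs_mul, abs_of_nonneg (hc₀ _)] using
    norm_tsum_le_tsum_norm habs

theorem abs_tsum_mul_le (hc₀ : ∀ k, 0 ≤ c k) (hc : Summable c) {f : ℕ → ℝ} {B : ℝ}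
    (hf : ∀ k, |f k| ≤ B) : |∑' k, c k * f k| ≤ (∑' k, c k) * B :=
  calc |∑' k, c k * f k| ≤ ∑' k, c k * |f k| := abs_tsum_mul_le_tsum_mul_abs hc₀ hc hf
    _ ≤ ∑' k, c k * B :=
      (summable_mul_of_abs_le hc₀ hc fun k => (abs_abs (f k)).trans_le (hf k)).tsum_le_tsum
        (fun k => mul_le_mul_of_nonneg_left (hf k) (hc₀ k)) (hc.mul_right B)
    _ = (∑' k, c k) * B := tsum_mul_right

theorem tsum_sub_succ (hc : Summable c) : ∑' k, (c k - c (k + 1)) = c 0 := by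
  rw [hc.tsum_sub ((summable_nat_add_iff 1).2 hc), hc.tsum_eq_zero_add, add_sub_cancel_right]

theorem tsum_mul_sub_succ_by_parts (hc₀ : ∀ k, 0 ≤ c k) (hc : Summable c) {b : ℕ → ℝ} {B : ℝ}
    (hb : ∀ k, |b k| ≤ B) :
    ∑' k, c k * (b (k + 1) - b k) = ∑' k, (c k - c (k + 1)) * b (k + 1) - c 0 * b 0 := by
  have h₁ := summable_mul_of_abs_le hc₀ hc fun k => hb (k + 1)
  have h₀ := summable_mul_of_abs_le hc₀ hc hb
  have h₁' := (summable_nat_add_iff 1).2 h₀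
  simp_rw [mul_sub, sub_mul]
  rw [h₁.tsum_sub h₀, h₁.tsum_sub h₁', h₀.tsum_eq_zero_add]
  ring

end Weights

theorem tsum_tsum_mul_shift {c : ℕ → ℝ} {f : ℤ → ℝ} (hc₀ : 0 ≤ c) (hc : Summable c)
    (hf₀ : 0 ≤ f) (hf : Summable f) :
    Summable (fun i : ℤ => ∑' k, c k * f (i + k + 1)) ∧
      ∑' i : ℤ, ∑' k, c k * f (i + k + 1) = (∑' k, c k) * ∑' j, f j := by
  let e : ℕ × ℤ ≃ ℕ × ℤ :=
    Equiv.prodShear (Equiv.refl ℕ) fun k => Equiv.addRight ((k : ℤ) + 1)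
  have hprod : Summable fun p : ℕ × ℤ => c p.1 * f p.2 := hc.mul_of_nonneg hf hc₀ hf₀
  have hshift : Summable fun p : ℕ × ℤ => c p.1 * f (p.2 + p.1 + 1) := by
    have := (e.summable_iff (f := fun p : ℕ × ℤ => c p.1 * f p.2)).2 hprod
    convert this using 2 with p
    simp [e, add_assoc]
  have hshiftTsum (k : ℕ) : ∑' i : ℤ, f (i + k + 1) = ∑' j, f j := by
    simpa only [Equiv.coe_addRight, add_assoc] using (Equiv.addRight ((k : ℤ) + 1)).tsum_eq f
  refine ⟨hshift.prod_symm.prod, ?_⟩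
  rw [Summable.tsum_comm (f := fun k i => c k * f (i + k + 1)) hshift]
  simp only [tsum_mul_left, hshiftTsum, tsum_mul_right]

theorem abs_sub_sub_mul_sub_of_monotone {W : ℝ → ℝ} {K : ℝ≥0} (hW : Monotone W)
    (hWL : LipschitzWith K W) {s : ℝ} (hs : 0 ≤ s) (hsK : s * K ≤ 1) (x y : ℝ) :
    |x - y - s * (W x - W y)| = |x - y| - s * |W x - W y| := by
  wlog hxy : y ≤ x generalizing x y
  · rw [abs_sub_comm x y, abs_sub_comm (W x) (W y), ← this y x (le_of_not_ge hxy), ← abs_neg]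
    ring_nf
  have hd : 0 ≤ x - y := sub_nonneg.2 hxy
  have ha : 0 ≤ W x - W y := sub_nonneg.2 (hW hxy)
  have hle : W x - W y ≤ K * (x - y) := by
    simpa only [Real.dist_eq, abs_of_nonneg hd, abs_of_nonneg ha] using hWL.dist_le_mul x y
  rw [abs_of_nonneg hd, abs_of_nonneg ha, abs_of_nonneg]
  nlinarith [mul_le_mul_of_nonneg_left hle hs, mul_le_mul_of_nonneg_right hsK hd]

theorem LipschitzWith.exists_abs_comp_le {ι : Type*} {W : ℝ → ℝ} {K : ℝ≥0}
    (hW : LipschitzWith K W) {u : ι → ℝ} (hu : ∃ M, ∀ i, |u i| ≤ M) :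
    ∃ B, ∀ i, |W (u i)| ≤ B := by
  obtain ⟨M, hM⟩ := hu
  refine ⟨|W 0| + K * M, fun i => ?_⟩
  have h := hW.dist_le_mul (u i) 0
  rw [Real.dist_eq, Real.dist_eq, sub_zero] at h
  nlinarith [abs_sub_abs_le_abs_sub (W (u i)) (W 0), hM i, K.coe_nonneg]

section schemeStep

variable {I : ℕ → ℝ} {W : ℝ → ℝ} {lam : ℝ}

theorem schemeStep_eq (hI₀ : ∀ k, 0 ≤ I k) (hI : Summable I) {u : ℤ → ℝ} {B : ℝ}
    (hWu : ∀ j, |W (u j)| ≤ B) (i : ℤ) :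
    schemeStep I W lam u i =
      u i - lam * I 0 * W (u i) + lam * ∑' k : ℕ, (I k - I (k + 1)) * W (u (i + k + 1)) := by
  have h := tsum_mul_sub_succ_by_parts hI₀ hI (b := fun k : ℕ => W (u (i + k))) fun k => hWu _
  simp only [Nat.cast_add, Nat.cast_one, Nat.cast_zero, add_zero, ← add_assoc] at h
  rw [schemeStep, h]
  ring

theorem schemeStep_sub_schemeStep (hI₀ : ∀ k, 0 ≤ I k) (hIanti : Antitone I) (hI : Summable I)
    {u v : ℤ → ℝ} {Bu Bv : ℝ} (hWu : ∀ j, |W (u j)| ≤ Bu) (hWv : ∀ j, |W (v j)| ≤ Bv) (i : ℤ) :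
    schemeStep I W lam u i - schemeStep I W lam v i =
      u i - v i - lam * I 0 * (W (u i) - W (v i)) +
        lam * ∑' k : ℕ, (I k - I (k + 1)) * (W (u (i + k + 1)) - W (v (i + k + 1))) := by
  have hc₀ : ∀ k, 0 ≤ I k - I (k + 1) := fun k => sub_nonneg.2 (hIanti k.le_succ)
  have hc : Summable fun k => I k - I (k + 1) := hI.sub ((summable_nat_add_iff 1).2 hI)
  simp_rw [mul_sub]
  rw [schemeStep_eq hI₀ hI hWu, schemeStep_eq hI₀ hI hWv,
    (summable_mul_of_abs_le hc₀ hc fun k => hWu _).tsum_sub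
      (summable_mul_of_abs_le hc₀ hc fun k => hWv _)]
  ring

theorem schemeStep_bounded (hI₀ : ∀ k, 0 ≤ I k) (hI : Summable I) {K : ℝ≥0}
    (hWL : LipschitzWith K W) {u : ℤ → ℝ} (hu : ∃ M, ∀ i, |u i| ≤ M) :
    ∃ M, ∀ i, |schemeStep I W lam u i| ≤ M := by
  obtain ⟨M, hM⟩ := hu
  obtain ⟨B, hB⟩ := hWL.exists_abs_comp_le ⟨M, hM⟩
  refine ⟨M + |lam| * ((∑' k, I k) * (B + B)), fun i => ?_⟩
  have hdiff : ∀ k : ℕ, |W (u (i + k + 1)) - W (u (i + k))| ≤ B + B := fun k =>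
    (abs_sub _ _).trans (add_le_add (hB _) (hB _))
  calc |schemeStep I W lam u i|
      ≤ |u i| + |lam| * |∑' k : ℕ, I k * (W (u (i + k + 1)) - W (u (i + k)))| := by
        rw [schemeStep, ← abs_mul]; exact abs_add_le _ _
    _ ≤ M + |lam| * ((∑' k, I k) * (B + B)) := by
        gcongr
        · exact hM i
        · exact abs_tsum_mul_le hI₀ hI hdiff

theorem schemeStep_l1_contraction (hI₀ : ∀ k, 0 ≤ I k) (hIanti : Antitone I) (hI : Summable I)
    {K : ℝ≥0} (hW : Monotone W) (hWL : LipschitzWith K W) (hlam : 0 ≤ lam)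
    (hCFL : lam * I 0 * K ≤ 1) {u v : ℤ → ℝ} (hu : ∃ M, ∀ i, |u i| ≤ M)
    (hv : ∃ M, ∀ i, |v i| ≤ M) (hd : Summable fun i => |u i - v i|) :
    Summable (fun i => |schemeStep I W lam u i - schemeStep I W lam v i|) ∧
      ∑' i, |schemeStep I W lam u i - schemeStep I W lam v i| ≤ ∑' i, |u i - v i| := by
  obtain ⟨Bu, hBu⟩ := hWL.exists_abs_comp_le hu
  obtain ⟨Bv, hBv⟩ := hWL.exists_abs_comp_le hv
  set a : ℤ → ℝ := fun j => W (u j) - W (v j)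
  set c : ℕ → ℝ := fun k => I k - I (k + 1)
  have hc₀ : ∀ k, 0 ≤ c k := fun k => sub_nonneg.2 (hIanti k.le_succ)
  have hc : Summable c := hI.sub ((summable_nat_add_iff 1).2 hI)
  have hab : ∀ j, |a j| ≤ Bu + Bv := fun j => (abs_sub _ _).trans (add_le_add (hBu j) (hBv j))
  have ha : Summable fun j => |a j| :=
    (hd.mul_left (K : ℝ)).of_nonneg_of_le (fun _ => abs_nonneg _) fun j => by
      simpa only [Real.dist_eq] using hWL.dist_le_mul (u j) (v j)
  obtain ⟨hR, hRsum⟩ := tsum_tsum_mul_shift hc₀ hc (fun j => abs_nonneg (a j)) ha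
  set bound : ℤ → ℝ := fun i =>
    |u i - v i| - lam * I 0 * |a i| + lam * ∑' k, c k * |a (i + k + 1)| with hbound_def
  have hpointwise : ∀ i, |schemeStep I W lam u i - schemeStep I W lam v i| ≤ bound i := by
    intro i
    rw [schemeStep_sub_schemeStep hI₀ hIanti hI hBu hBv]
    refine (abs_add_le _ _).trans ?_
    rw [abs_sub_sub_mul_sub_of_monotone hW hWL (mul_nonneg hlam (hI₀ 0)) hCFL, abs_mul,
      abs_of_nonneg hlam]
    exact add_le_add le_rfl (mul_le_mul_of_nonneg_left
      (abs_tsum_mul_le_tsum_mul_abs hc₀ hc fun k => hab _) hlam)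
  have hbound : Summable bound := (hd.sub (ha.mul_left _)).add (hR.mul_left lam)
  have hbound_tsum : ∑' i, bound i = ∑' i, |u i - v i| := by
    rw [hbound_def, (hd.sub (ha.mul_left _)).tsum_add (hR.mul_left lam),
      hd.tsum_sub (ha.mul_left _), tsum_mul_left, tsum_mul_left, hRsum, tsum_sub_succ hI]
    ring
  have hsummable := hbound.of_nonneg_of_le (fun _ => abs_nonneg _) hpointwise
  exact ⟨hsummable, hbound_tsum ▸ hsummable.tsum_le_tsum hpointwise hbound⟩

theorem schemeStep_iterate_l1_contraction (hI₀ : ∀ k, 0 ≤ I k) (hIanti : Antitone I)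
    (hI : Summable I) {K : ℝ≥0} (hW : Monotone W) (hWL : LipschitzWith K W) (hlam : 0 ≤ lam)
    (hCFL : lam * I 0 * K ≤ 1) {w v : ℕ → ℤ → ℝ} (hw₀ : ∃ M, ∀ i, |w 0 i| ≤ M)
    (hv₀ : ∃ M, ∀ i, |v 0 i| ≤ M) (hw : ∀ n i, w (n + 1) i = schemeStep I W lam (w n) i)
    (hv : ∀ n i, v (n + 1) i = schemeStep I W lam (v n) i)
    (hd : Summable fun i => |w 0 i - v 0 i|) (n : ℕ) :
    Summable (fun i => |w n i - v n i|) ∧ ∑' i, |w n i - v n i| ≤ ∑' i, |w 0 i - v 0 i| := by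
  have hbdd : ∀ n, (∃ M, ∀ i, |w n i| ≤ M) ∧ ∃ M, ∀ i, |v n i| ≤ M := by
    intro n
    induction n with
    | zero => exact ⟨hw₀, hv₀⟩
    | succ n ih =>
      simp only [hw, hv]
      exact ⟨schemeStep_bounded hI₀ hI hWL ih.1, schemeStep_bounded hI₀ hI hWL ih.2⟩
  induction n with
  | zero => exact ⟨hd, le_rfl⟩
  | succ n ih =>
    simp only [hw, hv]
    obtain ⟨hsum, hle⟩ := schemeStep_l1_contraction hI₀ hIanti hI hW hWL hlam hCFL
      (hbdd n).1 (hbdd n).2 ih.1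
    exact ⟨hsum, hle.trans ih.2⟩

end schemeStep

theorem stmt_1_general
    (Φ : ℝ → ℝ) (α Δz Δt lam L : ℝ)
    (hα : 0 < α) (hΔz : 0 < Δz) (hΔt : 0 < Δt) (hlam : lam = Δt / Δz)
    (hΦnonneg : ∀ z : ℝ, 0 ≤ z → 0 ≤ Φ z)
    (hΦmono : ∀ x y : ℝ, 0 ≤ x → x ≤ y → Φ y ≤ Φ x)
    (hΦmass : ∫ ζ in Set.Ioi (0:ℝ), Φ ζ = 1)
    (W : ℝ → ℝ) (hW : Differentiable ℝ W)
    (hW' : ∀ x : ℝ, 0 ≤ deriv W x ∧ deriv W x ≤ L)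
    (hCFL : 0 ≤ lam * L ∧ lam * L ≤ 1)
    (I : ℕ → ℝ)
    (hI : ∀ k : ℕ, I k = ∫ ζ in ((k : ℝ) * Δz)..(((k : ℝ) + 1) * Δz), (1/α) * Φ (ζ/α))
    (w v : ℕ → ℤ → ℝ)
    (hw0B : ∃ M, ∀ i, |w 0 i| ≤ M) (hv0B : ∃ M, ∀ i, |v 0 i| ≤ M)
    (hwrec : ∀ n : ℕ, ∀ i : ℤ, w (n+1) i = schemeStep I W lam (w n) i)
    (hvrec : ∀ n : ℕ, ∀ i : ℤ, v (n+1) i = schemeStep I W lam (v n) i)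
    (h0 : Summable (fun i : ℤ => |w 0 i - v 0 i|)) :
    ∀ n : ℕ, Summable (fun i : ℤ => |w n i - v n i|) ∧
      ∑' i : ℤ, |w n i - v n i| ≤ ∑' i : ℤ, |w 0 i - v 0 i| := by
  have hh : 0 ≤ Δz / α := by positivity
  have hIcell : I = cellIntegral Φ (Δz / α) :=
    funext fun k => (hI k).trans (intervalIntegral_comp_div_eq_cellIntegral Φ hα Δz k)
  have hΦanti : AntitoneOn Φ (Ici 0) := fun x hx y _ hxy => hΦmono x y hx hxy
  have hΦint : IntegrableOn Φ (Ioi 0) := Integrable.of_integral_ne_zero (by simp [hΦmass])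
  have hI₀ : ∀ k, 0 ≤ I k := hIcell ▸ cellIntegral.nonneg hΦnonneg hh
  have hIanti : Antitone I := hIcell ▸ cellIntegral.antitone hΦanti hh
  have hIs : Summable I := hIcell ▸ cellIntegral.summable hΦnonneg hΦanti hΦint hh
  have hI01 : I 0 ≤ 1 := hIcell ▸ hΦmass ▸ cellIntegral.apply_zero_le hΦnonneg hΦanti hΦint hh
  have hL : 0 ≤ L := (hW' 0).1.trans (hW' 0).2
  have hWmono : Monotone W := monotone_of_deriv_nonneg hW fun x => (hW' x).1
  have hWL : LipschitzWith L.toNNReal W := lipschitzWith_of_nnnorm_deriv_le hW fun x => by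
    rw [Real.nnnorm_of_nonneg (hW' x).1, ← NNReal.coe_le_coe, Real.coe_toNNReal L hL]
    exact (hW' x).2
  have hlam₀ : 0 ≤ lam := hlam ▸ by positivity
  have hCFL' : lam * I 0 * L.toNNReal ≤ 1 := by
    rw [Real.coe_toNNReal L hL]; nlinarith [hI₀ 0]
  exact schemeStep_iterate_l1_contraction hI₀ hIanti hIs hWmono hWL hlam₀ hCFL' hw0B hv0B
    hwrec hvrec h0

/-- under the CFL condition `0 ≤ λL ≤ 1`, the filtered scheme is
`L¹` contractive: if the initial difference is summable, then at every later
step the difference is summable and its `ℓ¹` norm does not increase. -/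
theorem stmt_1
    (Φ : ℝ → ℝ) (α Δz Δt lam L : ℝ)
    (hα : 0 < α) (hΔz : 0 < Δz) (hΔt : 0 < Δt) (hlam : lam = Δt / Δz)
    (hΦnonneg : ∀ z : ℝ, 0 ≤ z → 0 ≤ Φ z)
    (hΦmono : ∀ x y : ℝ, 0 ≤ x → x ≤ y → Φ y ≤ Φ x)
    (hΦmass : ∫ ζ in Set.Ioi (0:ℝ), Φ ζ = 1)
    (hΦmom : IntegrableOn (fun ζ => ζ * Φ ζ) (Set.Ioi (0:ℝ)))
    (W : ℝ → ℝ) (hW : Differentiable ℝ W)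
    (hW' : ∀ x : ℝ, 0 ≤ deriv W x ∧ deriv W x ≤ L)
    (hCFL : 0 ≤ lam * L ∧ lam * L ≤ 1)
    (I : ℕ → ℝ)
    (hI : ∀ k : ℕ, I k = ∫ ζ in ((k : ℝ) * Δz)..(((k : ℝ) + 1) * Δz), (1/α) * Φ (ζ/α))
    (w v : ℕ → ℤ → ℝ)
    (hw0B : ∃ M, ∀ i, |w 0 i| ≤ M) (hv0B : ∃ M, ∀ i, |v 0 i| ≤ M)
    (hwrec : ∀ n : ℕ, ∀ i : ℤ, w (n+1) i = schemeStep I W lam (w n) i)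
    (hvrec : ∀ n : ℕ, ∀ i : ℤ, v (n+1) i = schemeStep I W lam (v n) i)
    (h0 : Summable (fun i : ℤ => |w 0 i - v 0 i|)) :
    ∀ n : ℕ, Summable (fun i : ℤ => |w n i - v n i|) ∧
      ∑' i : ℤ, |w n i - v n i| ≤ ∑' i : ℤ, |w 0 i - v 0 i| :=
  stmt_1_general Φ α Δz Δt lam L hα hΔz hΔt hlam hΦnonneg hΦmono hΦmass W hW hW' hCFL I hI w v hw0B
    hv0B hwrec hvrec h0
end

section
/- Assume the CFL condition 0 ≤ λL ≤ 1. Let y₀ : ℤ → ℝ be bounded with Σ_{i∈ℤ} |y₀_{i+1} − y₀_i| < ∞, let w⁰_i = Σ_{j≥i} I_{j−i} y₀_j be the averaged initial data, and let w^{n+1} = G(w^n). Then for every n ≥ 0, Σ_{i∈ℤ} |w^n_{i+1} − w^n_i| ≤ Σ_{i∈ℤ} |y₀_{i+1} − y₀_i|; this bound is independent of the filter size α. -/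
open MeasureTheory

lemma tsum_shift_ofReal (f : ℤ → ℝ) (c : ℤ) :
    ∑' i : ℤ, ENNReal.ofReal (f (i + c)) = ∑' i : ℤ, ENNReal.ofReal (f i) :=
  (Equiv.addRight c).tsum_eq (fun i => ENNReal.ofReal (f i))

lemma step_TV
    (I : ℕ → ℝ) (hIpos : ∀ k, 0 ≤ I k) (hIanti : ∀ k, I (k+1) ≤ I k)
    (hIsum : Summable I) (hItsum : ∑' k, I k ≤ 1)
    (W : ℝ → ℝ) (L lam : ℝ) (hlam0 : 0 ≤ lam) (hCFL : lam * L ≤ 1)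
    (c : ℝ → ℝ → ℝ)
    (hc : ∀ a b : ℝ, W b - W a = c a b * (b - a) ∧ 0 ≤ c a b ∧ c a b ≤ L)
    (w : ℤ → ℝ) (hd : Summable (fun i : ℤ => |w (i+1) - w i|)) :
    ∑' i : ℤ, ENNReal.ofReal |schemeStep I W lam w (i+1) - schemeStep I W lam w i|
      ≤ ∑' i : ℤ, ENNReal.ofReal |w (i+1) - w i| := by
  classical
  set d : ℤ → ℝ := fun i => w (i+1) - w i with hd_def
  set ci : ℤ → ℝ := fun i => c (w i) (w (i+1)) with hci_def
  set g : ℤ → ℝ := fun i => ci i * d i with hg_def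
  have hg : ∀ i, W (w (i+1)) - W (w i) = g i := fun i => (hc (w i) (w (i+1))).1
  have hL : 0 ≤ L := le_trans (hc 0 0).2.1 (hc 0 0).2.2
  have hci : ∀ i, 0 ≤ ci i ∧ ci i ≤ L := fun i => (hc (w i) (w (i+1))).2
  set T : ℝ := ∑' i, |d i| with hT_def
  have hdT : ∀ i, |d i| ≤ T := fun i => Summable.le_tsum hd i (fun j _ => abs_nonneg _)
  have hT0 : 0 ≤ T := tsum_nonneg (fun i => abs_nonneg _)
  have hgb : ∀ j, |g j| ≤ L * T := by
    intro j
    rw [hg_def, abs_mul, abs_of_nonneg (hci j).1]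
    exact mul_le_mul (hci j).2 (hdT j) (abs_nonneg _) hL
  set J : ℕ → ℝ := fun k => I k - I (k+1) with hJ_def
  have hJpos : ∀ k, 0 ≤ J k := fun k => sub_nonneg.mpr (hIanti k)
  have hJsum : Summable J := hIsum.sub ((summable_nat_add_iff 1).2 hIsum)
  have hJtsum : ∑' k, J k ≤ I 0 := by
    apply Summable.tsum_le_of_sum_range_le hJsum
    intro n
    rw [hJ_def]
    rw [Finset.sum_range_sub' I]
    linarith [hIpos n]
  have hI0 : I 0 ≤ 1 := le_trans (Summable.le_tsum hIsum 0 (fun j _ => hIpos j)) hItsum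
  -- summability of the inner series
  have hsumg : ∀ m : ℤ, Summable (fun k : ℕ => I k * g (m + k)) := by
    intro m
    have habs : Summable (fun k : ℕ => |I k * g (m + k)|) := by
      apply Summable.of_nonneg_of_le (fun k => abs_nonneg _) _ (hIsum.mul_right (L*T))
      intro k
      rw [abs_mul, abs_of_nonneg (hIpos k)]
      exact mul_le_mul_of_nonneg_left (hgb _) (hIpos k)
    exact habs.of_abs
  have hsumJg : ∀ m : ℤ, Summable (fun k : ℕ => J k * g (m + k + 1)) := by
    intro m
    have habs : Summable (fun k : ℕ => |J k * g (m + k + 1)|) := by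
      apply Summable.of_nonneg_of_le (fun k => abs_nonneg _) _ (hJsum.mul_right (L*T))
      intro k
      rw [abs_mul, abs_of_nonneg (hJpos k)]
      exact mul_le_mul_of_nonneg_left (hgb _) (hJpos k)
    exact habs.of_abs
  -- the scheme in terms of g
  have hstep : ∀ i, schemeStep I W lam w i = w i + lam * ∑' k : ℕ, I k * g (i + k) := by
    intro i
    unfold schemeStep
    congr 1
    congr 1
    apply tsum_congr
    intro k
    rw [hg (i + k)]
  -- key formula for the increment
  have key : ∀ i : ℤ, schemeStep I W lam w (i+1) - schemeStep I W lam w i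
      = (1 - lam * I 0 * ci i) * d i + lam * ∑' k : ℕ, J k * g (i + k + 1) := by
    intro i
    rw [hstep, hstep]
    have e1 : ∑' k : ℕ, I k * g ((i+1) + k) = ∑' k : ℕ, I k * g (i + k + 1) :=
      tsum_congr (fun k => by rw [add_right_comm])
    have hsh : Summable (fun k : ℕ => I (k+1) * g (i + k + 1)) := by
      have := (summable_nat_add_iff 1).2 (hsumg i)
      apply this.congr
      intro k
      push_cast
      ring_nf
    have e2 : ∑' k : ℕ, I k * g (i + k) = I 0 * g i + ∑' k : ℕ, I (k+1) * g (i + k + 1) := by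
      rw [Summable.tsum_eq_zero_add (hsumg i)]
      congr 1
      · push_cast; ring_nf
      · apply tsum_congr
        intro k
        congr 2
        push_cast
        ring
    have e3 : ∑' k : ℕ, I k * g (i + k + 1) - ∑' k : ℕ, I (k+1) * g (i + k + 1)
        = ∑' k : ℕ, J k * g (i + k + 1) := by
      rw [← Summable.tsum_sub ((hsumg (i+1)).congr (fun k => by rw [add_right_comm])) hsh]
      apply tsum_congr
      intro k
      rw [hJ_def]
      ring
    rw [e1, e2, ← e3, hg_def]
    ring
  -- nonnegative quantities
  set F : ℤ → ℝ := fun i => ci i * |d i| with hF_def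
  have hF0 : ∀ i, 0 ≤ F i := fun i => mul_nonneg (hci i).1 (abs_nonneg _)
  have hFb : ∀ i, F i ≤ L * T := fun i => mul_le_mul (hci i).2 (hdT i) (abs_nonneg _) hL
  have hsumJF : ∀ i : ℤ, Summable (fun k : ℕ => J k * F (i + k + 1)) := by
    intro i
    apply Summable.of_nonneg_of_le (fun k => mul_nonneg (hJpos k) (hF0 _)) _
      (hJsum.mul_right (L*T))
    intro k
    exact mul_le_mul_of_nonneg_left (hFb _) (hJpos k)
  have hcoef : ∀ i, 0 ≤ 1 - lam * I 0 * ci i := by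
    intro i
    have h1 : lam * ci i ≤ 1 := le_trans (mul_le_mul_of_nonneg_left (hci i).2 hlam0) hCFL
    have h2 : 0 ≤ lam * ci i := mul_nonneg hlam0 (hci i).1
    nlinarith [hIpos 0, hI0, h1, h2]
  have habs' : ∀ i : ℤ, |schemeStep I W lam w (i+1) - schemeStep I W lam w i|
      ≤ (1 - lam * I 0 * ci i) * |d i| + lam * ∑' k : ℕ, J k * F (i + k + 1) := by
    intro i
    rw [key i]
    refine le_trans (abs_add_le _ _) (add_le_add ?_ ?_)
    · rw [abs_mul, abs_of_nonneg (hcoef i)]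
    · rw [abs_mul, abs_of_nonneg hlam0]
      apply mul_le_mul_of_nonneg_left _ hlam0
      have heq : ∀ k : ℕ, J k * F (i + k + 1) = |J k * g (i + k + 1)| := by
        intro k
        have h : |J k * g (i + k + 1)| = J k * (ci (i + k + 1) * |d (i + k + 1)|) := by
          rw [hg_def, abs_mul, abs_mul, abs_of_nonneg (hJpos k), abs_of_nonneg (hci _).1]
        rw [h]
      have hs : Summable (fun k : ℕ => |J k * g (i + k + 1)|) :=
        (hsumJF i).congr heq
      calc |∑' k : ℕ, J k * g (i + k + 1)| ≤ ∑' k : ℕ, |J k * g (i + k + 1)| := by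
            have h := norm_tsum_le_tsum_norm (f := fun k : ℕ => J k * g (i + k + 1))
              (by simpa [Real.norm_eq_abs, abs_mul] using hs)
            simpa [Real.norm_eq_abs, abs_mul] using h
        _ = ∑' k : ℕ, J k * F (i + k + 1) := (tsum_congr heq).symm
  -- pass to ℝ≥0∞
  have hSinonneg : ∀ i : ℤ, 0 ≤ ∑' k : ℕ, J k * F (i + k + 1) :=
    fun i => tsum_nonneg (fun k => mul_nonneg (hJpos k) (hF0 _))
  have second : ∑' i : ℤ, ENNReal.ofReal (lam * ∑' k : ℕ, J k * F (i + k + 1))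
      ≤ ENNReal.ofReal lam * (ENNReal.ofReal (I 0) * ∑' i : ℤ, ENNReal.ofReal (F i)) := by
    have e1 : ∀ i : ℤ, ENNReal.ofReal (lam * ∑' k : ℕ, J k * F (i + k + 1))
        = ENNReal.ofReal lam * ∑' k : ℕ, ENNReal.ofReal (J k) * ENNReal.ofReal (F (i + k + 1)) := by
      intro i
      rw [ENNReal.ofReal_mul hlam0,
        ENNReal.ofReal_tsum_of_nonneg (fun k => mul_nonneg (hJpos k) (hF0 _)) (hsumJF i)]
      congr 1
      exact tsum_congr fun k => ENNReal.ofReal_mul (hJpos k)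
    calc ∑' i : ℤ, ENNReal.ofReal (lam * ∑' k : ℕ, J k * F (i + k + 1))
        = ENNReal.ofReal lam * ∑' i : ℤ, ∑' k : ℕ, ENNReal.ofReal (J k) * ENNReal.ofReal (F (i + k + 1)) := by
          rw [← ENNReal.tsum_mul_left]; exact tsum_congr e1
      _ = ENNReal.ofReal lam * ∑' k : ℕ, ∑' i : ℤ, ENNReal.ofReal (J k) * ENNReal.ofReal (F (i + k + 1)) := by
          rw [ENNReal.tsum_comm]
      _ = ENNReal.ofReal lam * ∑' k : ℕ, ENNReal.ofReal (J k) * ∑' i : ℤ, ENNReal.ofReal (F (i + k + 1)) := by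
          congr 1; exact tsum_congr fun k => ENNReal.tsum_mul_left
      _ = ENNReal.ofReal lam * ∑' k : ℕ, ENNReal.ofReal (J k) * ∑' i : ℤ, ENNReal.ofReal (F i) := by
          congr 1
          apply tsum_congr
          intro k
          congr 1
          rw [← tsum_shift_ofReal F ((k:ℤ)+1)]
          exact tsum_congr fun i => by rw [← add_assoc]
      _ = ENNReal.ofReal lam * ((∑' k : ℕ, ENNReal.ofReal (J k)) * ∑' i : ℤ, ENNReal.ofReal (F i)) := by
          rw [ENNReal.tsum_mul_right]
      _ ≤ ENNReal.ofReal lam * (ENNReal.ofReal (I 0) * ∑' i : ℤ, ENNReal.ofReal (F i)) := by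
          gcongr
          rw [← ENNReal.ofReal_tsum_of_nonneg hJpos hJsum]
          exact ENNReal.ofReal_le_ofReal hJtsum
  have final : (∑' i : ℤ, ENNReal.ofReal ((1 - lam * I 0 * ci i) * |d i|))
      + ENNReal.ofReal lam * (ENNReal.ofReal (I 0) * ∑' i : ℤ, ENNReal.ofReal (F i))
      = ∑' i : ℤ, ENNReal.ofReal |d i| := by
    rw [← ENNReal.tsum_mul_left, ← ENNReal.tsum_mul_left, ← ENNReal.tsum_add]
    apply tsum_congr
    intro i
    rw [← ENNReal.ofReal_mul (hIpos 0), ← ENNReal.ofReal_mul hlam0,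
      ← ENNReal.ofReal_add (mul_nonneg (hcoef i) (abs_nonneg _))
        (mul_nonneg hlam0 (mul_nonneg (hIpos 0) (hF0 i)))]
    congr 1
    rw [hF_def]
    ring
  calc ∑' i : ℤ, ENNReal.ofReal |schemeStep I W lam w (i+1) - schemeStep I W lam w i|
      ≤ ∑' i : ℤ, (ENNReal.ofReal ((1 - lam * I 0 * ci i) * |d i|)
          + ENNReal.ofReal (lam * ∑' k : ℕ, J k * F (i + k + 1))) := by
        apply ENNReal.tsum_le_tsum
        intro i
        rw [← ENNReal.ofReal_add (mul_nonneg (hcoef i) (abs_nonneg _))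
          (mul_nonneg hlam0 (hSinonneg i))]
        exact ENNReal.ofReal_le_ofReal (habs' i)
    _ = (∑' i : ℤ, ENNReal.ofReal ((1 - lam * I 0 * ci i) * |d i|))
        + ∑' i : ℤ, ENNReal.ofReal (lam * ∑' k : ℕ, J k * F (i + k + 1)) := ENNReal.tsum_add
    _ ≤ (∑' i : ℤ, ENNReal.ofReal ((1 - lam * I 0 * ci i) * |d i|))
        + ENNReal.ofReal lam * (ENNReal.ofReal (I 0) * ∑' i : ℤ, ENNReal.ofReal (F i)) := by
        gcongr
    _ = ∑' i : ℤ, ENNReal.ofReal |d i| := final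

lemma avg_TV (I : ℕ → ℝ) (hIpos : ∀ k, 0 ≤ I k) (hIsum : Summable I)
    (hItsum : ∑' k, I k ≤ 1)
    (y : ℤ → ℝ) (M : ℝ) (hyB : ∀ i, |y i| ≤ M)
    (hyBV : Summable (fun i : ℤ => |y (i+1) - y i|)) :
    ∑' i : ℤ, ENNReal.ofReal |discAvg I y (i+1) - discAvg I y i|
      ≤ ∑' i : ℤ, ENNReal.ofReal |y (i+1) - y i| := by
  set e : ℤ → ℝ := fun i => |y (i+1) - y i| with he_def
  have he0 : ∀ i, 0 ≤ e i := fun i => abs_nonneg _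
  have heb : ∀ j, e j ≤ M + M := by
    intro j
    refine le_trans (abs_sub _ _) (add_le_add (hyB _) (hyB _))
  have hsumy : ∀ m : ℤ, Summable (fun k : ℕ => I k * y (m + k)) := by
    intro m
    have h : Summable (fun k : ℕ => |I k * y (m + k)|) := by
      apply Summable.of_nonneg_of_le (fun k => abs_nonneg _) _ (hIsum.mul_right M)
      intro k
      rw [abs_mul, abs_of_nonneg (hIpos k)]
      exact mul_le_mul_of_nonneg_left (hyB _) (hIpos k)
    exact h.of_abs
  have hsume : ∀ m : ℤ, Summable (fun k : ℕ => I k * e (m + k)) := by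
    intro m
    apply Summable.of_nonneg_of_le (fun k => mul_nonneg (hIpos k) (he0 _)) _
      (hIsum.mul_right (M + M))
    intro k
    exact mul_le_mul_of_nonneg_left (heb _) (hIpos k)
  have hkey : ∀ i : ℤ, discAvg I y (i+1) - discAvg I y i
      = ∑' k : ℕ, I k * (y (i + k + 1) - y (i + k)) := by
    intro i
    unfold discAvg
    rw [← Summable.tsum_sub (hsumy (i+1)) (hsumy i)]
    apply tsum_congr
    intro k
    rw [add_right_comm]
    ring
  have habs : ∀ i : ℤ, |discAvg I y (i+1) - discAvg I y i| ≤ ∑' k : ℕ, I k * e (i + k) := by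
    intro i
    rw [hkey i]
    have heq : ∀ k : ℕ, I k * e (i + k) = |I k * (y (i + k + 1) - y (i + k))| := by
      intro k
      rw [abs_mul, abs_of_nonneg (hIpos k)]
    have hs : Summable (fun k : ℕ => |I k * (y (i + k + 1) - y (i + k))|) :=
      (hsume i).congr heq
    calc |∑' k : ℕ, I k * (y (i + k + 1) - y (i + k))|
        ≤ ∑' k : ℕ, |I k * (y (i + k + 1) - y (i + k))| := by
          have h := norm_tsum_le_tsum_norm
            (f := fun k : ℕ => I k * (y (i + k + 1) - y (i + k)))
            (by simpa [Real.norm_eq_abs, abs_mul] using hs)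
          simpa [Real.norm_eq_abs, abs_mul] using h
      _ = ∑' k : ℕ, I k * e (i + k) := (tsum_congr heq).symm
  calc ∑' i : ℤ, ENNReal.ofReal |discAvg I y (i+1) - discAvg I y i|
      ≤ ∑' i : ℤ, ENNReal.ofReal (∑' k : ℕ, I k * e (i + k)) :=
        ENNReal.tsum_le_tsum (fun i => ENNReal.ofReal_le_ofReal (habs i))
    _ = ∑' i : ℤ, ∑' k : ℕ, ENNReal.ofReal (I k) * ENNReal.ofReal (e (i + k)) := by
        apply tsum_congr
        intro i
        rw [ENNReal.ofReal_tsum_of_nonneg (fun k => mul_nonneg (hIpos k) (he0 _)) (hsume i)]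
        exact tsum_congr fun k => ENNReal.ofReal_mul (hIpos k)
    _ = ∑' k : ℕ, ∑' i : ℤ, ENNReal.ofReal (I k) * ENNReal.ofReal (e (i + k)) :=
        ENNReal.tsum_comm
    _ = ∑' k : ℕ, ENNReal.ofReal (I k) * ∑' i : ℤ, ENNReal.ofReal (e i) := by
        apply tsum_congr
        intro k
        rw [ENNReal.tsum_mul_left]
        congr 1
        exact tsum_shift_ofReal e (k : ℤ)
    _ = (∑' k : ℕ, ENNReal.ofReal (I k)) * ∑' i : ℤ, ENNReal.ofReal (e i) :=
        ENNReal.tsum_mul_right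
    _ ≤ 1 * ∑' i : ℤ, ENNReal.ofReal (e i) := by
        gcongr
        rw [← ENNReal.ofReal_tsum_of_nonneg hIpos hIsum]
        exact le_trans (ENNReal.ofReal_le_ofReal hItsum) (by simp)
    _ = ∑' i : ℤ, ENNReal.ofReal (e i) := one_mul _

section Aux
open intervalIntegral

lemma kernel_props (Φ : ℝ → ℝ) (α Δz : ℝ) (hα : 0 < α) (hΔz : 0 < Δz)
    (hΦnonneg : ∀ z : ℝ, 0 ≤ z → 0 ≤ Φ z)
    (hΦmono : ∀ x y : ℝ, 0 ≤ x → x ≤ y → Φ y ≤ Φ x)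
    (hΦmass : ∫ ζ in Set.Ioi (0:ℝ), Φ ζ = 1)
    (I : ℕ → ℝ)
    (hI : ∀ k : ℕ, I k = ∫ ζ in ((k : ℝ) * Δz)..(((k : ℝ) + 1) * Δz), (1/α) * Φ (ζ/α)) :
    (∀ k, 0 ≤ I k) ∧ (∀ k, I (k+1) ≤ I k) ∧ Summable I ∧ ∑' k, I k ≤ 1 := by
  have hΦint : IntegrableOn Φ (Set.Ioi (0:ℝ)) := by
    by_contra h
    rw [integral_undef h] at hΦmass
    norm_num at hΦmass
  have hΦanti : AntitoneOn Φ (Set.Ici (0:ℝ)) := fun x hx y hy hxy => hΦmono x y hx hxy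
  set β := Δz / α with hβ
  have hβ0 : 0 < β := div_pos hΔz hα
  -- rewrite I k
  have hI' : ∀ k : ℕ, I k = ∫ x in ((k:ℝ)*β)..(((k:ℝ)+1)*β), Φ x := by
    intro k
    rw [hI k, intervalIntegral.integral_const_mul, intervalIntegral.integral_comp_div (f := Φ) (ne_of_gt hα)]
    rw [smul_eq_mul]
    rw [mul_div_assoc, mul_div_assoc]
    rw [one_div, inv_mul_cancel_left₀ (ne_of_gt hα)]
  have hint : ∀ a b : ℝ, 0 ≤ a → 0 ≤ b → IntervalIntegrable Φ volume a b := by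
    intro a b ha hb
    exact AntitoneOn.intervalIntegrable (hΦanti.mono
      (fun x hx => le_trans (le_inf ha hb) hx.1))
  have hknn : ∀ k : ℕ, (0:ℝ) ≤ (k:ℝ) * β := fun k =>
    mul_nonneg (Nat.cast_nonneg k) hβ0.le
  have hknn' : ∀ k : ℕ, (0:ℝ) ≤ ((k:ℝ)+1) * β := fun k =>
    mul_nonneg (by positivity) hβ0.le
  have hIpos : ∀ k, 0 ≤ I k := by
    intro k
    rw [hI' k]
    apply intervalIntegral.integral_nonneg
    · nlinarith [hβ0.le, (Nat.cast_nonneg k : (0:ℝ) ≤ k)]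
    · intro u hu
      exact hΦnonneg u (le_trans (hknn k) hu.1)
  have hIanti : ∀ k, I (k+1) ≤ I k := by
    intro k
    rw [hI' k, hI' (k+1)]
    have e1 : ((k + 1 : ℕ) : ℝ) * β = (k:ℝ) * β + β := by push_cast; ring
    have e2 : (((k + 1 : ℕ) : ℝ) + 1) * β = ((k:ℝ)+1) * β + β := by push_cast; ring
    rw [e1, e2, ← intervalIntegral.integral_comp_add_right (f := Φ) (d := β)]
    have hab : (k:ℝ)*β ≤ ((k:ℝ)+1)*β := by nlinarith [hβ0.le, (Nat.cast_nonneg k : (0:ℝ) ≤ k)]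
    have hshift : IntervalIntegrable (fun x => Φ (x + β)) volume ((k:ℝ)*β) (((k:ℝ)+1)*β) := by
      have h := (hint ((k:ℝ)*β + β) (((k:ℝ)+1)*β + β)
        (by nlinarith [(Nat.cast_nonneg k : (0:ℝ) ≤ k), hβ0.le])
        (by nlinarith [(Nat.cast_nonneg k : (0:ℝ) ≤ k), hβ0.le])).comp_add_right β
      simpa using h
    refine intervalIntegral.integral_mono_on hab hshift (hint _ _ (hknn k) (hknn' k)) ?_
    intro x hx
    exact hΦmono x (x+β) (le_trans (hknn k) hx.1) (by linarith)
  have hpartial : ∀ N : ℕ, ∑ k ∈ Finset.range N, I k = ∫ x in (0:ℝ)..((N:ℝ)*β), Φ x := by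
    intro N
    have := intervalIntegral.sum_integral_adjacent_intervals
      (f := Φ) (μ := volume) (a := fun k : ℕ => (k:ℝ)*β) (n := N)
      (fun k _ => by
        have : ((k:ℝ)+1) * β = ((k+1:ℕ):ℝ) * β := by push_cast; ring
        have h := hint ((k:ℝ)*β) (((k:ℝ)+1)*β) (hknn k) (hknn' k)
        rwa [this] at h)
    simp only [Nat.cast_zero, zero_mul] at this
    rw [← this]
    apply Finset.sum_congr rfl
    intro k _
    rw [hI' k]
    congr 1
    push_cast; ring
  have hbound : ∀ N : ℕ, ∑ k ∈ Finset.range N, I k ≤ 1 := by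
    intro N
    rw [hpartial N, ← hΦmass,
      intervalIntegral.integral_of_le (hknn N)]
    apply setIntegral_mono_set hΦint
    · exact (ae_restrict_iff' measurableSet_Ioi).mpr
        (Filter.Eventually.of_forall fun x hx => hΦnonneg x (le_of_lt hx))
    · exact HasSubset.Subset.eventuallyLE Set.Ioc_subset_Ioi_self
  have hsummable : Summable I := summable_of_sum_range_le hIpos hbound
  exact ⟨hIpos, hIanti, hsummable, Summable.tsum_le_of_sum_range_le hsummable hbound⟩


lemma slope_props (W : ℝ → ℝ) (L : ℝ) (hW : Differentiable ℝ W)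
    (hW' : ∀ x : ℝ, 0 ≤ deriv W x ∧ deriv W x ≤ L) :
    ∃ c : ℝ → ℝ → ℝ, ∀ a b : ℝ,
      W b - W a = c a b * (b - a) ∧ 0 ≤ c a b ∧ c a b ≤ L := by
  have hL : 0 ≤ L := le_trans (hW' 0).1 (hW' 0).2
  have hmono : Monotone W := monotone_of_deriv_nonneg hW (fun x => (hW' x).1)
  have hlip : LipschitzWith L.toNNReal W := by
    apply lipschitzWith_of_nnnorm_deriv_le hW
    intro x
    rw [← NNReal.coe_le_coe, coe_nnnorm, Real.norm_eq_abs, Real.coe_toNNReal _ hL,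
      abs_of_nonneg (hW' x).1]
    exact (hW' x).2
  have hlip' : ∀ a b : ℝ, |W b - W a| ≤ L * |b - a| := by
    intro a b
    have := hlip.dist_le_mul b a
    rwa [Real.dist_eq, Real.dist_eq, Real.coe_toNNReal _ hL] at this
  refine ⟨fun a b => if h : b = a then 0 else (W b - W a)/(b - a), fun a b => ?_⟩
  by_cases h : b = a
  · simp [h, hL]
  · simp only [dif_neg h]
    have hne : b - a ≠ 0 := sub_ne_zero.mpr h
    refine ⟨(div_mul_cancel₀ _ hne).symm, ?_, ?_⟩
    · rcases le_or_gt a b with hab | hab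
      · exact div_nonneg (sub_nonneg.mpr (hmono hab)) (sub_nonneg.mpr hab)
      · exact div_nonneg_of_nonpos (sub_nonpos.mpr (hmono hab.le))
          (sub_nonpos.mpr hab.le)
    · calc (W b - W a)/(b - a) ≤ |(W b - W a)/(b - a)| := le_abs_self _
        _ = |W b - W a| / |b - a| := abs_div _ _
        _ ≤ (L * |b - a|) / |b - a| := by
            apply div_le_div_of_nonneg_right (hlip' a b) (abs_pos.mpr hne).le
        _ = L := by field_simp

end Aux


/-- under the CFL condition `0 ≤ λL ≤ 1`, the total variation of
the filtered-scheme iterates is bounded by the total variation of the initial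
data `y₀`, uniformly in the filter size `α`. -/
theorem stmt_3
    (Φ : ℝ → ℝ) (α Δz Δt lam L : ℝ)
    (hα : 0 < α) (hΔz : 0 < Δz) (hΔt : 0 < Δt) (hlam : lam = Δt / Δz)
    (hΦnonneg : ∀ z : ℝ, 0 ≤ z → 0 ≤ Φ z)
    (hΦmono : ∀ x y : ℝ, 0 ≤ x → x ≤ y → Φ y ≤ Φ x)
    (hΦmass : ∫ ζ in Set.Ioi (0:ℝ), Φ ζ = 1)
    (hΦmom : IntegrableOn (fun ζ => ζ * Φ ζ) (Set.Ioi (0:ℝ)))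
    (W : ℝ → ℝ) (hW : Differentiable ℝ W)
    (hW' : ∀ x : ℝ, 0 ≤ deriv W x ∧ deriv W x ≤ L)
    (hCFL : 0 ≤ lam * L ∧ lam * L ≤ 1)
    (I : ℕ → ℝ)
    (hI : ∀ k : ℕ, I k = ∫ ζ in ((k : ℝ) * Δz)..(((k : ℝ) + 1) * Δz), (1/α) * Φ (ζ/α))
    (y₀ : ℤ → ℝ) (hy₀B : ∃ M, ∀ i, |y₀ i| ≤ M)
    (hy₀BV : Summable (fun i : ℤ => |y₀ (i+1) - y₀ i|))
    (w : ℕ → ℤ → ℝ)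
    (hw0 : ∀ i : ℤ, w 0 i = discAvg I y₀ i)
    (hwrec : ∀ n : ℕ, ∀ i : ℤ, w (n+1) i = schemeStep I W lam (w n) i) :
    ∀ n : ℕ, Summable (fun i : ℤ => |w n (i+1) - w n i|) ∧
      ∑' i : ℤ, |w n (i+1) - w n i| ≤ ∑' i : ℤ, |y₀ (i+1) - y₀ i| := by
  obtain ⟨hIpos, hIanti, hIsum, hItsum⟩ := kernel_props Φ α Δz hα hΔz hΦnonneg hΦmono hΦmass I hI
  obtain ⟨c, hc⟩ := slope_props W L hW hW'
  obtain ⟨M, hyB⟩ := hy₀B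
  have hlam0 : 0 ≤ lam := by rw [hlam]; positivity
  set E : ENNReal := ∑' i : ℤ, ENNReal.ofReal |y₀ (i+1) - y₀ i| with hE
  have hEfin : E ≠ ⊤ := by
    rw [hE, ← ENNReal.ofReal_tsum_of_nonneg (fun i => abs_nonneg _) hy₀BV]
    exact ENNReal.ofReal_ne_top
  have sob : ∀ v : ℤ → ℝ, (∑' i : ℤ, ENNReal.ofReal |v i| ≤ E) → Summable (fun i => |v i|) := by
    intro v hv
    have hne : (∑' i : ℤ, ENNReal.ofReal |v i|) ≠ ⊤ := ne_top_of_le_ne_top hEfin hv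
    have := ENNReal.summable_toReal hne
    apply this.congr
    intro i
    exact ENNReal.toReal_ofReal (abs_nonneg _)
  have main : ∀ n : ℕ, (∑' i : ℤ, ENNReal.ofReal |w n (i+1) - w n i| ≤ E)
      ∧ Summable (fun i : ℤ => |w n (i+1) - w n i|) := by
    intro n
    induction n with
    | zero =>
      have hb : ∑' i : ℤ, ENNReal.ofReal |w 0 (i+1) - w 0 i| ≤ E := by
        have h := avg_TV I hIpos hIsum hItsum y₀ M hyB hy₀BV
        rw [hE]
        calc ∑' i : ℤ, ENNReal.ofReal |w 0 (i+1) - w 0 i|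
            = ∑' i : ℤ, ENNReal.ofReal |discAvg I y₀ (i+1) - discAvg I y₀ i| :=
              tsum_congr fun i => by rw [hw0 (i+1), hw0 i]
          _ ≤ _ := h
      exact ⟨hb, sob _ hb⟩
    | succ n ih =>
      have hb : ∑' i : ℤ, ENNReal.ofReal |w (n+1) (i+1) - w (n+1) i| ≤ E := by
        calc ∑' i : ℤ, ENNReal.ofReal |w (n+1) (i+1) - w (n+1) i|
            = ∑' i : ℤ, ENNReal.ofReal
                |schemeStep I W lam (w n) (i+1) - schemeStep I W lam (w n) i| :=
              tsum_congr fun i => by rw [hwrec n (i+1), hwrec n i]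
          _ ≤ ∑' i : ℤ, ENNReal.ofReal |w n (i+1) - w n i| :=
              step_TV I hIpos hIanti hIsum hItsum W L lam hlam0 hCFL.2 c hc (w n) ih.2
          _ ≤ E := ih.1
      exact ⟨hb, sob _ hb⟩
  intro n
  obtain ⟨hb, hs⟩ := main n
  refine ⟨hs, ?_⟩
  have h2 : ENNReal.ofReal (∑' i : ℤ, |w n (i+1) - w n i|)
      ≤ ENNReal.ofReal (∑' i : ℤ, |y₀ (i+1) - y₀ i|) := by
    rw [ENNReal.ofReal_tsum_of_nonneg (fun i => abs_nonneg _) hs,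
      ENNReal.ofReal_tsum_of_nonneg (fun i => abs_nonneg _) hy₀BV]
    exact hb
  exact (ENNReal.ofReal_le_ofReal_iff (tsum_nonneg fun i => abs_nonneg _)).mp h2
end

section
/- Assume the CFL condition 0 ≤ λL ≤ 1. Let y₀ : ℤ → ℝ be bounded with Σ_{i∈ℤ} |y₀_{i+1} − y₀_i| < ∞, let w⁰_i = Σ_{j≥i} I_{j−i} y₀_j be the averaged initial data, and let w^{n+1} = G(w^n). Then for every n ≥ 0, Δz · Σ_{i∈ℤ} |w^{n+1}_i − w^n_i| ≤ Δt · L · Σ_{i∈ℤ} |y₀_{i+1} − y₀_i|. -/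
open MeasureTheory


private lemma tsum_shift' (g : ℤ → ℝ) (c : ℤ) : ∑' i : ℤ, g (i + c) = ∑' i : ℤ, g i :=
  (Equiv.addRight c).tsum_eq g

private lemma summable_shift {g : ℤ → ℝ} (hg : Summable g) (c : ℤ) :
    Summable (fun i : ℤ => g (i + c)) :=
  ((Equiv.addRight c).summable_iff (f := g)).2 hg

private lemma keysum {J : ℕ → ℝ} {g : ℤ → ℝ} (hJ0 : ∀ k, 0 ≤ J k) (hg0 : ∀ i, 0 ≤ g i)
    (hJ : Summable J) (hg : Summable g) :
    Summable (fun i : ℤ => ∑' k : ℕ, J k * g (i + (k:ℤ)))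
    ∧ ∑' i : ℤ, ∑' k : ℕ, J k * g (i + (k:ℤ)) = (∑' k, J k) * (∑' i, g i) := by
  have hprod : Summable (fun p : ℤ × ℕ => g p.1 * J p.2) :=
    hg.mul_of_nonneg hJ (fun i => hg0 i) (fun k => hJ0 k)
  let e : ℤ × ℕ ≃ ℤ × ℕ :=
    { toFun := fun p => (p.1 + (p.2:ℤ), p.2)
      invFun := fun p => (p.1 - (p.2:ℤ), p.2)
      left_inv := by intro p; simp
      right_inv := by intro p; simp }
  have hF : Summable (fun p : ℤ × ℕ => J p.2 * g (p.1 + (p.2:ℤ))) := by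
    have h2 := (e.summable_iff (f := fun p : ℤ × ℕ => g p.1 * J p.2)).2 hprod
    convert h2 using 1
    funext p; simp [e, Function.comp, mul_comm]
  have hfib : ∀ i : ℤ, HasSum (fun k : ℕ => J k * g (i + (k:ℤ)))
      (∑' k : ℕ, J k * g (i + (k:ℤ))) := fun i => (hF.prod_factor i).hasSum
  have hout : HasSum (fun i : ℤ => ∑' k : ℕ, J k * g (i + (k:ℤ)))
      (∑' p : ℤ × ℕ, J p.2 * g (p.1 + (p.2:ℤ))) := hF.hasSum.prod_fiberwise hfib
  refine ⟨hout.summable, ?_⟩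
  rw [hout.tsum_eq]
  calc ∑' p : ℤ × ℕ, J p.2 * g (p.1 + (p.2:ℤ))
      = ∑' p : ℤ × ℕ, g p.1 * J p.2 := by
        rw [← e.tsum_eq (fun p : ℤ × ℕ => g p.1 * J p.2)]
        exact tsum_congr fun p => by simp [e, mul_comm]
    _ = (∑' k, J k) * (∑' i, g i) := by
        rw [Summable.tsum_prod hprod]
        simp_rw [tsum_mul_left, tsum_mul_right]
        ring

private lemma slope_fact {W : ℝ → ℝ} {L : ℝ} (hW : Differentiable ℝ W)
    (hW' : ∀ x : ℝ, 0 ≤ deriv W x ∧ deriv W x ≤ L) (a b : ℝ) :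
    ∃ c : ℝ, 0 ≤ c ∧ c ≤ L ∧ W b - W a = c * (b - a) := by
  have hL0 : 0 ≤ L := le_trans (hW' 0).1 (hW' 0).2
  rcases lt_trichotomy a b with h | h | h
  · obtain ⟨x, _, hd⟩ := exists_hasDerivAt_eq_slope W (deriv W) h
      (hW.continuous.continuousOn) (fun x _ => (hW x).hasDerivAt)
    refine ⟨deriv W x, (hW' x).1, (hW' x).2, ?_⟩
    rw [hd, div_mul_cancel₀]
    exact sub_ne_zero.2 h.ne'
  · exact ⟨0, le_refl _, hL0, by rw [h]; ring⟩
  · obtain ⟨x, _, hd⟩ := exists_hasDerivAt_eq_slope W (deriv W) h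
      (hW.continuous.continuousOn) (fun x _ => (hW x).hasDerivAt)
    refine ⟨deriv W x, (hW' x).1, (hW' x).2, ?_⟩
    have h2 : W a - W b = deriv W x * (a - b) := by
      rw [hd, div_mul_cancel₀]
      exact sub_ne_zero.2 h.ne'
    linear_combination -h2

private lemma I_props {Φ : ℝ → ℝ} {α Δz : ℝ} (hα : 0 < α) (hΔz : 0 < Δz)
    (hΦnonneg : ∀ z : ℝ, 0 ≤ z → 0 ≤ Φ z)
    (hΦmono : ∀ x y : ℝ, 0 ≤ x → x ≤ y → Φ y ≤ Φ x)
    (hΦmass : ∫ ζ in Set.Ioi (0:ℝ), Φ ζ = 1)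
    {I : ℕ → ℝ}
    (hI : ∀ k : ℕ, I k = ∫ ζ in ((k : ℝ) * Δz)..(((k : ℝ) + 1) * Δz), (1/α) * Φ (ζ/α)) :
    (∀ k, 0 ≤ I k) ∧ (∀ k, I (k+1) ≤ I k) ∧ Summable I ∧ (∑' k, I k) ≤ 1 := by
  set Φα : ℝ → ℝ := fun ζ => (1/α) * Φ (ζ/α) with hΦα
  have hαnn : (0:ℝ) ≤ 1/α := by positivity
  have hanti : AntitoneOn Φα (Set.Ici (0:ℝ)) := by
    intro x hx y hy hxy
    exact mul_le_mul_of_nonneg_left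
      (hΦmono (x/α) (y/α) (div_nonneg hx hα.le) (by gcongr)) hαnn
  have hΦαnn : ∀ x : ℝ, 0 ≤ x → 0 ≤ Φα x := fun x hx =>
    mul_nonneg hαnn (hΦnonneg _ (div_nonneg hx hα.le))
  have hint : ∀ a b : ℝ, 0 ≤ a → 0 ≤ b → IntervalIntegrable Φα volume a b := by
    intro a b ha hb
    exact ((hanti.mono (fun x hx => le_trans (le_min ha hb) hx.1)).intervalIntegrable)
  have hint2 : ∀ a b : ℝ, 0 ≤ a → 0 ≤ b →
      IntervalIntegrable (fun x => Φα (x + Δz)) volume a b := by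
    intro a b ha hb
    refine AntitoneOn.intervalIntegrable ?_
    intro x hx y hy hxy
    have hx0 : 0 ≤ x := le_trans (le_min ha hb) hx.1
    exact hanti (by simp; linarith) (by simp; linarith [le_trans hx0 hxy]) (by linarith)
  -- nonnegativity
  have hInn : ∀ k, 0 ≤ I k := by
    intro k
    rw [hI k]
    apply intervalIntegral.integral_nonneg (by nlinarith [Nat.cast_nonneg (α := ℝ) k])
    intro u hu
    exact hΦαnn u (le_trans (by positivity) hu.1)
  -- monotonicity
  have hIdec : ∀ k, I (k+1) ≤ I k := by
    intro k
    have hk0 : (0:ℝ) ≤ (k:ℝ) * Δz := by positivity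
    have h1 : I (k+1) = ∫ x in ((k:ℝ) * Δz)..(((k:ℝ)+1) * Δz), Φα (x + Δz) := by
      rw [hI (k+1), intervalIntegral.integral_comp_add_right Φα Δz]
      congr 1 <;> push_cast <;> ring
    rw [h1, hI k]
    apply intervalIntegral.integral_mono_on (by nlinarith [Nat.cast_nonneg (α := ℝ) k])
      (hint2 _ _ hk0 (by positivity)) (hint _ _ hk0 (by positivity))
    intro x hx
    exact hanti (Set.mem_Ici.2 (le_trans hk0 hx.1)) (Set.mem_Ici.2 (by linarith [le_trans hk0 hx.1]))
      (by linarith)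
  -- partial sums bounded by 1
  have hΦint : IntegrableOn Φ (Set.Ioi (0:ℝ)) := by
    by_contra hc
    rw [integral_undef hc] at hΦmass
    norm_num at hΦmass
  have hpart : ∀ n : ℕ, ∑ k ∈ Finset.range n, I k ≤ 1 := by
    intro n
    have h := intervalIntegral.sum_integral_adjacent_intervals
      (f := Φα) (μ := volume) (a := fun k : ℕ => (k:ℝ) * Δz) (n := n)
      (fun k _ => hint _ _ (by positivity) (by positivity))
    have hsum : ∑ k ∈ Finset.range n, I k = ∫ x in ((0:ℕ):ℝ)*Δz..((n:ℝ) * Δz), Φα x := by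
      rw [← h]
      apply Finset.sum_congr rfl
      intro k _
      rw [hI k]
      congr 1 <;> push_cast <;> ring
    rw [hsum]
    have hT : (0:ℝ) ≤ (n:ℝ) * Δz := by positivity
    have step1 : ∫ x in ((0:ℕ):ℝ)*Δz..((n:ℝ) * Δz), Φα x
        = ∫ x in (0:ℝ)..((n:ℝ) * Δz / α), Φ x := by
      have e1 : ∫ x in ((0:ℕ):ℝ)*Δz..((n:ℝ) * Δz), Φα x
          = (1/α) * ∫ x in (0:ℝ)..((n:ℝ) * Δz), Φ (x/α) := by
        rw [← intervalIntegral.integral_const_mul]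
        congr 1
        norm_num
      rw [e1, intervalIntegral.integral_comp_div (a := 0) (b := (n:ℝ)*Δz) Φ hα.ne']
      simp [smul_eq_mul]
      field_simp
    rw [step1]
    have hS : (0:ℝ) ≤ (n:ℝ) * Δz / α := by positivity
    rw [intervalIntegral.integral_of_le hS]
    rw [← hΦmass]
    apply setIntegral_mono_set hΦint
    · exact (ae_restrict_iff' measurableSet_Ioi).2
        (Filter.Eventually.of_forall fun x hx => hΦnonneg x (le_of_lt hx))
    · exact Filter.Eventually.of_forall fun x hx => Set.Ioc_subset_Ioi_self hx
  exact ⟨hInn, hIdec, summable_of_sum_range_le hInn hpart,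
    Summable.tsum_le_of_sum_range_le (summable_of_sum_range_le hInn hpart) hpart⟩

private lemma tsum_abs_le' {I : ℕ → ℝ} (hInn : ∀ k, 0 ≤ I k)
    (f g : ℕ → ℝ) (hg : Summable (fun k => I k * g k)) (hf : ∀ k, |f k| ≤ g k) :
    Summable (fun k => I k * f k) ∧ |∑' k, I k * f k| ≤ ∑' k, I k * g k := by
  have habs : ∀ k, |I k * f k| ≤ I k * g k := by
    intro k
    rw [abs_mul, abs_of_nonneg (hInn k)]
    exact mul_le_mul_of_nonneg_left (hf k) (hInn k)
  have hs : Summable (fun k => |I k * f k|) :=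
    Summable.of_nonneg_of_le (fun k => abs_nonneg _) habs hg
  have hs' : Summable (fun k => ‖I k * f k‖) := by
    simp only [Real.norm_eq_abs]; exact hs
  refine ⟨hs.of_abs, ?_⟩
  calc |∑' k, I k * f k| ≤ ∑' k, |I k * f k| := by
        have := norm_tsum_le_tsum_norm hs'
        simp only [Real.norm_eq_abs] at this
        exact this
    _ ≤ ∑' k, I k * g k := Summable.tsum_le_tsum habs hs hg

/-- under the CFL condition `0 ≤ λL ≤ 1`, discrete `L¹` time
continuity of the filtered-scheme iterates:
`Δz Σ_i |w^{n+1}_i − w^n_i| ≤ Δt · L · Σ_i |y₀_{i+1} − y₀_i|`. -/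
theorem stmt_4
    (Φ : ℝ → ℝ) (α Δz Δt lam L : ℝ)
    (hα : 0 < α) (hΔz : 0 < Δz) (hΔt : 0 < Δt) (hlam : lam = Δt / Δz)
    (hΦnonneg : ∀ z : ℝ, 0 ≤ z → 0 ≤ Φ z)
    (hΦmono : ∀ x y : ℝ, 0 ≤ x → x ≤ y → Φ y ≤ Φ x)
    (hΦmass : ∫ ζ in Set.Ioi (0:ℝ), Φ ζ = 1)
    (hΦmom : IntegrableOn (fun ζ => ζ * Φ ζ) (Set.Ioi (0:ℝ)))
    (W : ℝ → ℝ) (hW : Differentiable ℝ W)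
    (hW' : ∀ x : ℝ, 0 ≤ deriv W x ∧ deriv W x ≤ L)
    (hCFL : 0 ≤ lam * L ∧ lam * L ≤ 1)
    (I : ℕ → ℝ)
    (hI : ∀ k : ℕ, I k = ∫ ζ in ((k : ℝ) * Δz)..(((k : ℝ) + 1) * Δz), (1/α) * Φ (ζ/α))
    (y₀ : ℤ → ℝ) (hy₀B : ∃ M, ∀ i, |y₀ i| ≤ M)
    (hy₀BV : Summable (fun i : ℤ => |y₀ (i+1) - y₀ i|))
    (w : ℕ → ℤ → ℝ)
    (hw0 : ∀ i : ℤ, w 0 i = discAvg I y₀ i)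
    (hwrec : ∀ n : ℕ, ∀ i : ℤ, w (n+1) i = schemeStep I W lam (w n) i) :
    ∀ n : ℕ, Summable (fun i : ℤ => |w (n+1) i - w n i|) ∧
      Δz * ∑' i : ℤ, |w (n+1) i - w n i| ≤ Δt * L * ∑' i : ℤ, |y₀ (i+1) - y₀ i| := by
  obtain ⟨hInn, hIdec, hIsum, hItsum⟩ := I_props hα hΔz hΦnonneg hΦmono hΦmass hI
  have hlam0 : 0 ≤ lam := by rw [hlam]; positivity
  have hL0 : 0 ≤ L := le_trans (hW' 0).1 (hW' 0).2
  have hslope := slope_fact hW hW'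
  have hLip : ∀ a b : ℝ, |W b - W a| ≤ L * |b - a| := by
    intro a b
    obtain ⟨c, hc0, hcL, hceq⟩ := hslope a b
    rw [hceq, abs_mul, abs_of_nonneg hc0]
    exact mul_le_mul_of_nonneg_right hcL (abs_nonneg _)
  have hItnn : 0 ≤ ∑' k, I k := tsum_nonneg hInn
  have hI0le1 : I 0 ≤ 1 := le_trans (Summable.le_tsum hIsum 0 (fun j _ => hInn j)) hItsum
  set D : ℕ → ℝ := fun k => I k - I (k+1) with hD
  have hDnn : ∀ k, 0 ≤ D k := fun k => sub_nonneg.2 (hIdec k)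
  have hDsum : Summable D :=
    Summable.of_nonneg_of_le hDnn (fun k => sub_le_self _ (hInn (k+1))) hIsum
  have hDtsum : ∑' k, D k = I 0 := by
    have h1 : Filter.Tendsto (fun n => ∑ k ∈ Finset.range n, D k)
        Filter.atTop (nhds (I 0)) := by
      have h2 : (fun n => ∑ k ∈ Finset.range n, D k) = fun n => I 0 - I n := by
        funext n; exact Finset.sum_range_sub' I n
      rw [h2]
      simpa using (tendsto_const_nhds.sub hIsum.tendsto_atTop_zero)
    exact tendsto_nhds_unique hDsum.hasSum.tendsto_sum_nat h1
  -- boundedness of the iterates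
  have hbd : ∀ n : ℕ, ∃ M : ℝ, 0 ≤ M ∧ ∀ i : ℤ, |w n i| ≤ M := by
    intro n
    induction n with
    | zero =>
      obtain ⟨M, hM⟩ := hy₀B
      have hM0 : 0 ≤ M := le_trans (abs_nonneg _) (hM 0)
      refine ⟨M, hM0, fun i => ?_⟩
      rw [hw0 i]
      have hb := tsum_abs_le' hInn (fun k : ℕ => y₀ (i + (k:ℤ))) (fun _ => M)
        (hIsum.mul_right M) (fun k => hM _)
      calc |discAvg I y₀ i| ≤ ∑' k : ℕ, I k * M := hb.2
        _ = (∑' k, I k) * M := tsum_mul_right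
        _ ≤ 1 * M := mul_le_mul_of_nonneg_right hItsum hM0
        _ = M := one_mul M
    | succ m ih =>
      obtain ⟨M, hM0, hM⟩ := ih
      refine ⟨M + lam * (L * (2 * M)), by positivity, fun i => ?_⟩
      rw [hwrec m i]
      have hb := tsum_abs_le' hInn
        (fun k : ℕ => W (w m (i + (k:ℤ) + 1)) - W (w m (i + (k:ℤ))))
        (fun _ => L * (2 * M)) (hIsum.mul_right _) ?_
      · calc |schemeStep I W lam (w m) i|
            ≤ |w m i| + |lam| * |∑' k : ℕ, I k * (W (w m (i + (k:ℤ) + 1)) - W (w m (i + (k:ℤ))))| := by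
              rw [← abs_mul]; exact abs_add_le _ _
          _ ≤ M + lam * ((∑' k, I k) * (L * (2 * M))) := by
              rw [abs_of_nonneg hlam0]
              have := hb.2
              rw [tsum_mul_right] at this
              exact add_le_add (hM i) (mul_le_mul_of_nonneg_left this hlam0)
          _ ≤ M + lam * (L * (2 * M)) := by
              have : (∑' k, I k) * (L * (2 * M)) ≤ 1 * (L * (2 * M)) :=
                mul_le_mul_of_nonneg_right hItsum (by positivity)
              nlinarith
      · intro k
        calc |W (w m (i + (k:ℤ) + 1)) - W (w m (i + (k:ℤ)))|
            ≤ L * |w m (i + (k:ℤ) + 1) - w m (i + (k:ℤ))| := hLip _ _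
          _ ≤ L * (2 * M) := by
              have h3 : |w m (i + (k:ℤ) + 1) - w m (i + (k:ℤ))| ≤ 2 * M := by
                have := abs_sub (w m (i + (k:ℤ) + 1)) (w m (i + (k:ℤ)))
                linarith [hM (i + (k:ℤ) + 1), hM (i + (k:ℤ))]
              exact mul_le_mul_of_nonneg_left h3 hL0
  have hTVnn : 0 ≤ ∑' i : ℤ, |y₀ (i+1) - y₀ i| := tsum_nonneg (fun i => abs_nonneg _)
  obtain ⟨M₀, hM₀⟩ := hy₀B
  have hy0s : ∀ i : ℤ, Summable (fun k : ℕ => I k * y₀ (i + (k:ℤ))) := fun i =>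
    (tsum_abs_le' hInn _ (fun _ => M₀) (hIsum.mul_right M₀) (fun k => hM₀ _)).1
  have hw0diff : ∀ i : ℤ, w 0 (i+1) - w 0 i
      = ∑' k : ℕ, I k * (y₀ (i + (k:ℤ) + 1) - y₀ (i + (k:ℤ))) := by
    intro i
    rw [hw0 (i+1), hw0 i]
    unfold discAvg
    rw [← Summable.tsum_sub (hy0s (i+1)) (hy0s i)]
    apply tsum_congr
    intro k
    rw [show i + 1 + (k:ℤ) = i + (k:ℤ) + 1 by ring]
    ring
  have hdbd : ∀ i : ℤ, |w 0 (i+1) - w 0 i|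
      ≤ ∑' k : ℕ, I k * |y₀ (i + (k:ℤ) + 1) - y₀ (i + (k:ℤ))| := by
    intro i
    rw [hw0diff i]
    refine (tsum_abs_le' hInn _ (fun k => |y₀ (i + (k:ℤ) + 1) - y₀ (i + (k:ℤ))|) ?_ (fun k => le_refl _)).2
    refine (tsum_abs_le' hInn _ (fun _ => 2*M₀) (hIsum.mul_right _) (fun k => ?_)).1
    rw [abs_abs]
    show |y₀ (i + (k:ℤ) + 1) - y₀ (i + (k:ℤ))| ≤ 2*M₀
    have := abs_sub (y₀ (i + (k:ℤ) + 1)) (y₀ (i + (k:ℤ)))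
    linarith [hM₀ (i + (k:ℤ) + 1), hM₀ (i + (k:ℤ))]
  have K0 := keysum (J := I) (g := fun j : ℤ => |y₀ (j+1) - y₀ j|) hInn
    (fun j => abs_nonneg _) hIsum hy₀BV
  have hdsum : Summable (fun i : ℤ => |w 0 (i+1) - w 0 i|) :=
    Summable.of_nonneg_of_le (fun i => abs_nonneg _) hdbd K0.1
  have hdle : ∑' i : ℤ, |w 0 (i+1) - w 0 i| ≤ ∑' i : ℤ, |y₀ (i+1) - y₀ i| := by
    calc ∑' i : ℤ, |w 0 (i+1) - w 0 i|
        ≤ ∑' i : ℤ, ∑' k : ℕ, I k * |y₀ (i + (k:ℤ) + 1) - y₀ (i + (k:ℤ))| :=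
          Summable.tsum_le_tsum hdbd hdsum K0.1
      _ = (∑' k, I k) * ∑' i : ℤ, |y₀ (i+1) - y₀ i| := K0.2
      _ ≤ 1 * ∑' i : ℤ, |y₀ (i+1) - y₀ i| := mul_le_mul_of_nonneg_right hItsum hTVnn
      _ = ∑' i : ℤ, |y₀ (i+1) - y₀ i| := one_mul _
  -- base case
  have base : Summable (fun i : ℤ => |w 1 i - w 0 i|) ∧
      ∑' i : ℤ, |w 1 i - w 0 i| ≤ lam * L * ∑' i : ℤ, |y₀ (i+1) - y₀ i| := by
    have ha0 : ∀ i : ℤ, w 1 i - w 0 i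
        = lam * ∑' k : ℕ, I k * (W (w 0 (i + (k:ℤ) + 1)) - W (w 0 (i + (k:ℤ)))) := by
      intro i; rw [hwrec 0 i]; unfold schemeStep; ring
    have habd : ∀ i : ℤ, |w 1 i - w 0 i|
        ≤ lam * ∑' k : ℕ, I k * (L * |w 0 (i + (k:ℤ) + 1) - w 0 (i + (k:ℤ))|) := by
      intro i
      rw [ha0 i, abs_mul, abs_of_nonneg hlam0]
      refine mul_le_mul_of_nonneg_left ?_ hlam0
      refine (tsum_abs_le' hInn _ _ ?_ (fun k => hLip _ _)).2
      obtain ⟨M, hM0, hM⟩ := hbd 0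
      refine Summable.of_nonneg_of_le
        (fun k => mul_nonneg (hInn k) (mul_nonneg hL0 (abs_nonneg _))) (fun k => ?_)
        (hIsum.mul_right (L * (2*M)))
      have h3 : |w 0 (i + (k:ℤ) + 1) - w 0 (i + (k:ℤ))| ≤ 2*M := by
        have := abs_sub (w 0 (i + (k:ℤ) + 1)) (w 0 (i + (k:ℤ)))
        linarith [hM (i + (k:ℤ) + 1), hM (i + (k:ℤ))]
      exact mul_le_mul_of_nonneg_left (mul_le_mul_of_nonneg_left h3 hL0) (hInn k)
    have K1 := keysum (J := I) (g := fun j : ℤ => L * |w 0 (j+1) - w 0 j|) hInn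
      (fun j => by positivity) hIsum (hdsum.mul_left L)
    have hsum1 : Summable (fun i : ℤ => |w 1 i - w 0 i|) :=
      Summable.of_nonneg_of_le (fun i => abs_nonneg _) habd (K1.1.mul_left lam)
    refine ⟨hsum1, ?_⟩
    have h2 : 0 ≤ ∑' i : ℤ, |w 0 (i+1) - w 0 i| := tsum_nonneg fun i => abs_nonneg _
    calc ∑' i : ℤ, |w 1 i - w 0 i|
        ≤ ∑' i : ℤ, lam * ∑' k : ℕ, I k * (L * |w 0 (i + (k:ℤ) + 1) - w 0 (i + (k:ℤ))|) :=
          Summable.tsum_le_tsum habd hsum1 (K1.1.mul_left lam)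
      _ = lam * ((∑' k, I k) * ∑' j : ℤ, L * |w 0 (j+1) - w 0 j|) := by
          rw [tsum_mul_left, K1.2]
      _ ≤ lam * (L * ∑' i : ℤ, |y₀ (i+1) - y₀ i|) := by
          refine mul_le_mul_of_nonneg_left ?_ hlam0
          rw [tsum_mul_left]
          calc (∑' k, I k) * (L * ∑' i : ℤ, |w 0 (i+1) - w 0 i|)
              ≤ 1 * (L * ∑' i : ℤ, |w 0 (i+1) - w 0 i|) :=
                mul_le_mul_of_nonneg_right hItsum (mul_nonneg hL0 h2)
            _ = L * ∑' i : ℤ, |w 0 (i+1) - w 0 i| := one_mul _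
            _ ≤ L * ∑' i : ℤ, |y₀ (i+1) - y₀ i| := mul_le_mul_of_nonneg_left hdle hL0
      _ = lam * L * ∑' i : ℤ, |y₀ (i+1) - y₀ i| := by ring
  -- summability of scheme series
  have hs : ∀ m : ℕ, ∀ i : ℤ,
      Summable (fun k : ℕ => I k * (W (w m (i + (k:ℤ) + 1)) - W (w m (i + (k:ℤ))))) := by
    intro m i
    obtain ⟨M, hM0, hM⟩ := hbd m
    refine (tsum_abs_le' hInn _ (fun _ => L * (2*M)) (hIsum.mul_right _) (fun k => ?_)).1
    calc |W (w m (i + (k:ℤ) + 1)) - W (w m (i + (k:ℤ)))|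
        ≤ L * |w m (i + (k:ℤ) + 1) - w m (i + (k:ℤ))| := hLip _ _
      _ ≤ L * (2 * M) := by
          have h4 := abs_sub (w m (i + (k:ℤ) + 1)) (w m (i + (k:ℤ)))
          have h3 : |w m (i + (k:ℤ) + 1) - w m (i + (k:ℤ))| ≤ 2*M := by
            linarith [hM (i + (k:ℤ) + 1), hM (i + (k:ℤ))]
          exact mul_le_mul_of_nonneg_left h3 hL0
  -- the contraction step
  have step : ∀ n : ℕ, Summable (fun i : ℤ => |w (n+1) i - w n i|) →
      Summable (fun i : ℤ => |w (n+2) i - w (n+1) i|) ∧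
      ∑' i : ℤ, |w (n+2) i - w (n+1) i| ≤ ∑' i : ℤ, |w (n+1) i - w n i| := by
    intro n hSn
    obtain ⟨Mn, hMn0, hMn⟩ := hbd n
    obtain ⟨Mn1, hMn10, hMn1⟩ := hbd (n+1)
    have hAbd : ∀ j : ℤ, |w (n+1) j - w n j| ≤ Mn + Mn1 := by
      intro j
      have := abs_sub (w (n+1) j) (w n j)
      linarith [hMn1 j, hMn j]
    choose c hc0 hcL hceq using fun j : ℤ => hslope (w n j) (w (n+1) j)
    have hbbd : ∀ j : ℤ, |c j * (w (n+1) j - w n j)| ≤ L * (Mn + Mn1) := by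
      intro j
      rw [abs_mul, abs_of_nonneg (hc0 j)]
      exact mul_le_mul (hcL j) (hAbd j) (abs_nonneg _) hL0
    have hsb1 : ∀ i : ℤ, Summable (fun k : ℕ =>
        I k * (c (i + (k:ℤ) + 1) * (w (n+1) (i + (k:ℤ) + 1) - w n (i + (k:ℤ) + 1)))) :=
      fun i => (tsum_abs_le' hInn _ (fun _ => L * (Mn + Mn1)) (hIsum.mul_right _)
        (fun k => hbbd _)).1
    have hsb0 : ∀ i : ℤ, Summable (fun k : ℕ =>
        I k * (c (i + (k:ℤ)) * (w (n+1) (i + (k:ℤ)) - w n (i + (k:ℤ))))) :=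
      fun i => (tsum_abs_le' hInn _ (fun _ => L * (Mn + Mn1)) (hIsum.mul_right _)
        (fun k => hbbd _)).1
    have hIsum' : Summable (fun k : ℕ => I (k+1)) := (summable_nat_add_iff 1).mpr hIsum
    have hsb2 : ∀ i : ℤ, Summable (fun k : ℕ =>
        I (k+1) * (c (i + (k:ℤ) + 1) * (w (n+1) (i + (k:ℤ) + 1) - w n (i + (k:ℤ) + 1)))) :=
      fun i => (tsum_abs_le' (fun k => hInn (k+1)) _ (fun _ => L * (Mn + Mn1))
        (hIsum'.mul_right _) (fun k => hbbd _)).1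
    -- key identity
    have hident : ∀ i : ℤ, w (n+2) i - w (n+1) i
        = (1 - lam * (I 0 * c i)) * (w (n+1) i - w n i)
          + lam * ∑' k : ℕ, D k * (c (i + (k:ℤ) + 1) * (w (n+1) (i + (k:ℤ) + 1) - w n (i + (k:ℤ) + 1))) := by
      intro i
      have e1 : w (n+2) i - w (n+1) i = (w (n+1) i - w n i)
          + lam * (∑' k : ℕ, I k * (W (w (n+1) (i + (k:ℤ) + 1)) - W (w (n+1) (i + (k:ℤ))))
                 - ∑' k : ℕ, I k * (W (w n (i + (k:ℤ) + 1)) - W (w n (i + (k:ℤ))))) := by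
        have q1 : w (n+2) i = w (n+1) i + lam * ∑' k : ℕ,
            I k * (W (w (n+1) (i + (k:ℤ) + 1)) - W (w (n+1) (i + (k:ℤ)))) := hwrec (n+1) i
        have q2 : w (n+1) i = w n i + lam * ∑' k : ℕ,
            I k * (W (w n (i + (k:ℤ) + 1)) - W (w n (i + (k:ℤ)))) := hwrec n i
        rw [q1, q2]
        ring
      have e2 : (∑' k : ℕ, I k * (W (w (n+1) (i + (k:ℤ) + 1)) - W (w (n+1) (i + (k:ℤ))))
               - ∑' k : ℕ, I k * (W (w n (i + (k:ℤ) + 1)) - W (w n (i + (k:ℤ)))))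
          = ∑' k : ℕ, (I k * (c (i + (k:ℤ) + 1) * (w (n+1) (i + (k:ℤ) + 1) - w n (i + (k:ℤ) + 1)))
                     - I k * (c (i + (k:ℤ)) * (w (n+1) (i + (k:ℤ)) - w n (i + (k:ℤ))))) := by
        rw [← Summable.tsum_sub (hs (n+1) i) (hs n i)]
        apply tsum_congr; intro k
        rw [← hceq (i + (k:ℤ) + 1), ← hceq (i + (k:ℤ))]
        ring
      have e3 := Summable.tsum_sub (hsb1 i) (hsb0 i)
      have e4 : ∑' k : ℕ, I k * (c (i+(k:ℤ)) * (w (n+1) (i+(k:ℤ)) - w n (i+(k:ℤ))))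
          = I 0 * (c i * (w (n+1) i - w n i))
            + ∑' k : ℕ, I (k+1) * (c (i+(k:ℤ)+1) * (w (n+1) (i+(k:ℤ)+1) - w n (i+(k:ℤ)+1))) := by
        rw [Summable.tsum_eq_zero_add (hsb0 i)]
        congr 1
        · norm_num
        · apply tsum_congr; intro k
          have hcast : ((k+1:ℕ):ℤ) = (k:ℤ)+1 := by push_cast; ring
          rw [hcast, ← add_assoc]
      have e5 : ∑' k : ℕ, I k * (c (i+(k:ℤ)+1) * (w (n+1) (i+(k:ℤ)+1) - w n (i+(k:ℤ)+1)))
            - ∑' k : ℕ, I (k+1) * (c (i+(k:ℤ)+1) * (w (n+1) (i+(k:ℤ)+1) - w n (i+(k:ℤ)+1)))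
          = ∑' k : ℕ, D k * (c (i+(k:ℤ)+1) * (w (n+1) (i+(k:ℤ)+1) - w n (i+(k:ℤ)+1))) := by
        rw [← Summable.tsum_sub (hsb1 i) (hsb2 i)]
        apply tsum_congr; intro k
        show _ = (I k - I (k+1)) * _
        ring
      rw [e1, e2, e3, e4]
      linear_combination lam * e5
    have hco : ∀ i : ℤ, 0 ≤ 1 - lam * (I 0 * c i) := by
      intro i
      nlinarith [mul_nonneg hlam0 (mul_nonneg (hInn 0) (hc0 i)),
        mul_nonneg hlam0 (sub_nonneg.2 (hcL i)),
        mul_nonneg (mul_nonneg hlam0 (hc0 i)) (sub_nonneg.2 hI0le1), hCFL.2]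
    -- summable D-series with abs values
    have hDgsum : ∀ i : ℤ, Summable (fun k : ℕ =>
        D k * (c (i+(k:ℤ)+1) * |w (n+1) (i+(k:ℤ)+1) - w n (i+(k:ℤ)+1)|)) := by
      intro i
      refine Summable.of_nonneg_of_le
        (fun k => mul_nonneg (hDnn k) (mul_nonneg (hc0 _) (abs_nonneg _)))
        (fun k => ?_) (hDsum.mul_right (L * (Mn + Mn1)))
      refine mul_le_mul_of_nonneg_left ?_ (hDnn k)
      exact mul_le_mul (hcL _) (hAbd _) (abs_nonneg _) hL0
    have habsb : ∀ i : ℤ, |w (n+2) i - w (n+1) i|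
        ≤ (1 - lam * (I 0 * c i)) * |w (n+1) i - w n i|
          + lam * ∑' k : ℕ, D k * (c (i+(k:ℤ)+1) * |w (n+1) (i+(k:ℤ)+1) - w n (i+(k:ℤ)+1)|) := by
      intro i
      rw [hident i]
      refine le_trans (abs_add_le _ _) (add_le_add ?_ ?_)
      · rw [abs_mul, abs_of_nonneg (hco i)]
      · rw [abs_mul, abs_of_nonneg hlam0]
        refine mul_le_mul_of_nonneg_left ?_ hlam0
        refine (tsum_abs_le' hDnn _ _ (hDgsum i) (fun k => ?_)).2
        exact le_of_eq (by rw [abs_mul, abs_of_nonneg (hc0 _)])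
    -- summability of the comparison function
    have hg0 : Summable (fun j : ℤ => c j * |w (n+1) j - w n j|) :=
      Summable.of_nonneg_of_le (fun j => mul_nonneg (hc0 j) (abs_nonneg _))
        (fun j => mul_le_mul_of_nonneg_right (hcL j) (abs_nonneg _)) (hSn.mul_left L)
    have hg0' : Summable (fun j : ℤ => c (j+1) * |w (n+1) (j+1) - w n (j+1)|) :=
      summable_shift hg0 1
    have K2 := keysum (J := D) (g := fun j : ℤ => c (j+1) * |w (n+1) (j+1) - w n (j+1)|)
      hDnn (fun j => mul_nonneg (hc0 _) (abs_nonneg _)) hDsum hg0'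
    have hgshift : ∑' j : ℤ, c (j+1) * |w (n+1) (j+1) - w n (j+1)|
        = ∑' j : ℤ, c j * |w (n+1) j - w n j| :=
      tsum_shift' (fun j : ℤ => c j * |w (n+1) j - w n j|) 1
    have hg0l : Summable (fun i : ℤ => (lam * I 0) * (c i * |w (n+1) i - w n i|)) :=
      hg0.mul_left _
    have hfirst : Summable (fun i : ℤ => (1 - lam * (I 0 * c i)) * |w (n+1) i - w n i|) :=
      (hSn.sub hg0l).congr (fun i => by ring)
    have hsecond : Summable (fun i : ℤ =>
        lam * ∑' k : ℕ, D k * (c (i+(k:ℤ)+1) * |w (n+1) (i+(k:ℤ)+1) - w n (i+(k:ℤ)+1)|)) :=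
      K2.1.mul_left lam
    have hSh : Summable (fun i : ℤ => (1 - lam * (I 0 * c i)) * |w (n+1) i - w n i|
        + lam * ∑' k : ℕ, D k * (c (i+(k:ℤ)+1) * |w (n+1) (i+(k:ℤ)+1) - w n (i+(k:ℤ)+1)|)) :=
      hfirst.add hsecond
    have hSnext : Summable (fun i : ℤ => |w (n+2) i - w (n+1) i|) :=
      Summable.of_nonneg_of_le (fun i => abs_nonneg _) habsb hSh
    refine ⟨hSnext, ?_⟩
    have htsumh : ∑' i : ℤ, ((1 - lam * (I 0 * c i)) * |w (n+1) i - w n i|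
        + lam * ∑' k : ℕ, D k * (c (i+(k:ℤ)+1) * |w (n+1) (i+(k:ℤ)+1) - w n (i+(k:ℤ)+1)|))
        = ∑' i : ℤ, |w (n+1) i - w n i| := by
      rw [Summable.tsum_add hfirst hsecond]
      have t1 : ∑' i : ℤ, (1 - lam * (I 0 * c i)) * |w (n+1) i - w n i|
          = ∑' i : ℤ, |w (n+1) i - w n i|
            - (lam * I 0) * ∑' i : ℤ, c i * |w (n+1) i - w n i| := by
        rw [← tsum_mul_left, ← Summable.tsum_sub hSn hg0l]
        apply tsum_congr; intro i
        ring
      have t2 : ∑' i : ℤ, lam * ∑' k : ℕ,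
            D k * (c (i+(k:ℤ)+1) * |w (n+1) (i+(k:ℤ)+1) - w n (i+(k:ℤ)+1)|)
          = lam * (I 0 * ∑' i : ℤ, c i * |w (n+1) i - w n i|) := by
        rw [tsum_mul_left, K2.2, hDtsum, hgshift]
      rw [t1, t2]
      ring
    calc ∑' i : ℤ, |w (n+2) i - w (n+1) i|
        ≤ ∑' i : ℤ, ((1 - lam * (I 0 * c i)) * |w (n+1) i - w n i|
          + lam * ∑' k : ℕ, D k * (c (i+(k:ℤ)+1) * |w (n+1) (i+(k:ℤ)+1) - w n (i+(k:ℤ)+1)|)) :=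
          Summable.tsum_le_tsum habsb hSnext hSh
      _ = ∑' i : ℤ, |w (n+1) i - w n i| := htsumh
  -- conclusion
  have main : ∀ n : ℕ, Summable (fun i : ℤ => |w (n+1) i - w n i|) ∧
      ∑' i : ℤ, |w (n+1) i - w n i| ≤ lam * L * ∑' i : ℤ, |y₀ (i+1) - y₀ i| := by
    intro n
    induction n with
    | zero => exact base
    | succ m ih =>
      obtain ⟨h1, h2⟩ := ih
      obtain ⟨h3, h4⟩ := step m h1
      exact ⟨h3, le_trans h4 h2⟩
  intro n
  obtain ⟨h1, h2⟩ := main n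
  refine ⟨h1, ?_⟩
  calc Δz * ∑' i : ℤ, |w (n+1) i - w n i|
      ≤ Δz * (lam * L * ∑' i : ℤ, |y₀ (i+1) - y₀ i|) := mul_le_mul_of_nonneg_left h2 hΔz.le
    _ = Δt * L * ∑' i : ℤ, |y₀ (i+1) - y₀ i| := by
        rw [hlam]
        field_simp
end

section
/- Assume the CFL condition 0 ≤ λL ≤ 1 and that Φ(0) < ∞. Let w⁰ : ℤ → ℝ be bounded, w^{n+1} = G(w^n), and set (Δŵ)⁰ = sup_{i∈ℤ} |w⁰_{i+1} − w⁰_i|. Then for every n ≥ 0 and every i ∈ ℤ, |w^n_{i+1} − w^n_i| ≤ (Δŵ)⁰ · exp( (2 L Φ(0)/α) · nΔt ). -/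
open MeasureTheory

lemma slopeAux (W : ℝ → ℝ) (L : ℝ) (hL : 0 ≤ L) (hmono : Monotone W)
    (hlip : ∀ x y : ℝ, |W x - W y| ≤ L * |x - y|) (x y : ℝ) :
    ∃ a : ℝ, 0 ≤ a ∧ a ≤ L ∧ W x - W y = a * (x - y) := by
  rcases eq_or_ne x y with h | h
  · subst h; exact ⟨0, le_rfl, hL, by simp⟩
  · refine ⟨(W x - W y) / (x - y), ?_, ?_, ?_⟩
    · rcases h.lt_or_gt with hxy | hxy
      · exact div_nonneg_of_nonpos (sub_nonpos.2 (hmono hxy.le))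
          (sub_nonpos.2 hxy.le)
      · exact div_nonneg (sub_nonneg.2 (hmono hxy.le)) (sub_nonneg.2 hxy.le)
    · have hxy0 : x - y ≠ 0 := sub_ne_zero.2 h
      have habs : |(W x - W y) / (x - y)| ≤ L := by
        rw [abs_div, div_le_iff₀ (abs_pos.2 hxy0)]
        exact hlip x y
      exact le_trans (le_abs_self _) habs
    · rw [div_mul_cancel₀ _ (sub_ne_zero.2 h)]


/-- under the CFL condition `0 ≤ λL ≤ 1`, the discrete spatial
increments of the filtered-scheme iterates grow at most like
`(Δŵ)⁰ · exp((2LΦ(0)/α) nΔt)`. -/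
theorem stmt_5
    (Φ : ℝ → ℝ) (α Δz Δt lam L : ℝ)
    (hα : 0 < α) (hΔz : 0 < Δz) (hΔt : 0 < Δt) (hlam : lam = Δt / Δz)
    (hΦnonneg : ∀ z : ℝ, 0 ≤ z → 0 ≤ Φ z)
    (hΦmono : ∀ x y : ℝ, 0 ≤ x → x ≤ y → Φ y ≤ Φ x)
    (hΦmass : ∫ ζ in Set.Ioi (0:ℝ), Φ ζ = 1)
    (hΦmom : IntegrableOn (fun ζ => ζ * Φ ζ) (Set.Ioi (0:ℝ)))
    (W : ℝ → ℝ) (hW : Differentiable ℝ W)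
    (hW' : ∀ x : ℝ, 0 ≤ deriv W x ∧ deriv W x ≤ L)
    (hCFL : 0 ≤ lam * L ∧ lam * L ≤ 1)
    (I : ℕ → ℝ)
    (hI : ∀ k : ℕ, I k = ∫ ζ in ((k : ℝ) * Δz)..(((k : ℝ) + 1) * Δz), (1/α) * Φ (ζ/α))
    (w : ℕ → ℤ → ℝ)
    (hw0B : ∃ M, ∀ i, |w 0 i| ≤ M)
    (hwrec : ∀ n : ℕ, ∀ i : ℤ, w (n+1) i = schemeStep I W lam (w n) i) :
    ∀ n : ℕ, ∀ i : ℤ,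
      |w n (i+1) - w n i| ≤
        (⨆ j : ℤ, |w 0 (j+1) - w 0 j|) * Real.exp ((2 * L * Φ 0 / α) * (n * Δt)) := by
  -- basic positivity facts
  have hL : 0 ≤ L := le_trans (hW' 0).1 (hW' 0).2
  have hΦ0 : 0 ≤ Φ 0 := hΦnonneg 0 le_rfl
  have hlam0 : 0 ≤ lam := by rw [hlam]; positivity
  set g : ℝ → ℝ := fun ζ => (1/α) * Φ (ζ/α) with hg
  have hganti : AntitoneOn g (Set.Ici 0) := by
    intro x hx y hy hxy
    have : Φ (y/α) ≤ Φ (x/α) := hΦmono _ _ (div_nonneg hx hα.le) (by gcongr)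
    have h1α : (0:ℝ) ≤ 1/α := by positivity
    exact mul_le_mul_of_nonneg_left this h1α
  have hgint : ∀ a b : ℝ, 0 ≤ a → 0 ≤ b → IntervalIntegrable g volume a b := by
    intro a b ha hb
    refine (hganti.mono ?_).intervalIntegrable
    intro x hx
    exact le_trans (le_inf ha hb) hx.1
  have hgnonneg : ∀ x : ℝ, 0 ≤ x → 0 ≤ g x := by
    intro x hx
    have : 0 ≤ Φ (x/α) := hΦnonneg _ (div_nonneg hx hα.le)
    positivity
  have hInonneg : ∀ k : ℕ, 0 ≤ I k := by
    intro k
    rw [hI k]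
    apply intervalIntegral.integral_nonneg (by nlinarith [Nat.cast_nonneg (α := ℝ) k])
    intro u hu
    exact hgnonneg u (le_trans (by nlinarith [Nat.cast_nonneg (α := ℝ) k]) hu.1)
  have hImono : ∀ k : ℕ, I (k+1) ≤ I k := by
    intro k
    have hk0 : (0:ℝ) ≤ (k:ℝ) * Δz := by positivity
    have hkk : (k:ℝ) * Δz ≤ ((k:ℝ)+1) * Δz := by nlinarith
    have hc : I (k+1) = ∫ x in ((k:ℝ) * Δz)..(((k:ℝ)+1) * Δz), g (x + Δz) := by
      rw [hI (k+1), intervalIntegral.integral_comp_add_right g Δz]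
      congr 1 <;> push_cast <;> ring
    rw [hc, hI k]
    apply intervalIntegral.integral_mono_on hkk
    · refine (AntitoneOn.intervalIntegrable ?_)
      intro x hx y hy hxy
      have hx' : 0 ≤ x + Δz := by
        have := hx.1; rw [Set.uIcc_of_le hkk] at hx; nlinarith [hx.1]
      have hy' : 0 ≤ y + Δz := by
        rw [Set.uIcc_of_le hkk] at hy; nlinarith [hy.1]
      exact hganti hx' hy' (by linarith)
    · exact hgint _ _ hk0 (by nlinarith)
    · intro x hx
      have hx0 : 0 ≤ x := le_trans hk0 hx.1
      exact hganti hx0 (Set.mem_Ici.2 (by linarith)) (by linarith)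
  -- integrability of Φ
  have hΦint : IntegrableOn Φ (Set.Ioi (0:ℝ)) := by
    by_contra h
    rw [integral_undef h] at hΦmass
    norm_num at hΦmass
  -- partial sums of I
  have hadj : ∀ N : ℕ, ∑ k ∈ Finset.range N, I k = ∫ x in (0:ℝ)..((N:ℝ)*Δz), g x := by
    intro N
    have h1 : ∀ k ∈ Finset.range N, I k
        = ∫ x in ((fun k : ℕ => (k:ℝ)*Δz) k)..((fun k : ℕ => (k:ℝ)*Δz) (k+1)), g x := by
      intro k _
      rw [hI k]; congr 1 <;> push_cast <;> ring
    rw [Finset.sum_congr rfl h1,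
      intervalIntegral.sum_integral_adjacent_intervals (fun k _ => by
        exact hgint _ _ (by positivity) (by positivity))]
    norm_num
  have hpartial : ∀ N : ℕ, ∑ k ∈ Finset.range N, I k ≤ 1 := by
    intro N
    rw [hadj N]
    have hNz : (0:ℝ) ≤ (N:ℝ)*Δz := by positivity
    have hsub : (∫ x in (0:ℝ)..((N:ℝ)*Δz), (1/α) * Φ (x/α)) = ∫ x in (0:ℝ)..((N:ℝ)*Δz/α), Φ x := by
      rw [intervalIntegral.integral_comp_div (f := fun y => (1/α) * Φ y) hα.ne',
        intervalIntegral.integral_const_mul, zero_div, smul_eq_mul]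
      field_simp
    have hgg : (∫ x in (0:ℝ)..((N:ℝ)*Δz), g x) = ∫ x in (0:ℝ)..((N:ℝ)*Δz), (1/α) * Φ (x/α) := rfl
    rw [hgg, hsub, intervalIntegral.integral_of_le (by positivity)]
    calc ∫ x in Set.Ioc (0:ℝ) ((N:ℝ)*Δz/α), Φ x
        ≤ ∫ x in Set.Ioi (0:ℝ), Φ x := by
          apply setIntegral_mono_set hΦint
          · exact (ae_restrict_iff' measurableSet_Ioi).2
              (Filter.Eventually.of_forall fun x hx => hΦnonneg x hx.le)
          · exact Filter.Eventually.of_forall fun x hx => hx.1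
      _ = 1 := hΦmass
  have hIsum : Summable I := summable_of_sum_range_le hInonneg hpartial
  have hI0le1 : I 0 ≤ 1 := by
    have := hpartial 1
    simpa using this
  have hI0le : I 0 ≤ Δz * Φ 0 / α := by
    have h0 : I 0 = ∫ x in (0:ℝ)..Δz, g x := by rw [hI 0]; norm_num
    rw [h0]
    have hmono' : ∀ x ∈ Set.Icc (0:ℝ) Δz, g x ≤ (1/α) * Φ 0 := by
      intro x hx
      have : Φ (x/α) ≤ Φ 0 := hΦmono 0 (x/α) le_rfl (div_nonneg hx.1 hα.le)
      have h1α : (0:ℝ) ≤ 1/α := by positivity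
      exact mul_le_mul_of_nonneg_left this h1α
    calc (∫ x in (0:ℝ)..Δz, g x) ≤ ∫ _ in (0:ℝ)..Δz, (1/α) * Φ 0 :=
          intervalIntegral.integral_mono_on hΔz.le (hgint 0 Δz le_rfl hΔz.le)
            intervalIntegrable_const hmono'
      _ = Δz * ((1/α) * Φ 0) := by simp; ring
      _ = Δz * Φ 0 / α := by ring
  -- W is monotone and Lipschitz
  have hWmono : Monotone W := monotone_of_deriv_nonneg hW fun x => (hW' x).1
  have hWlip : ∀ x y : ℝ, |W x - W y| ≤ L * |x - y| := by
    have hlipW : LipschitzWith L.toNNReal W := by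
      apply lipschitzWith_of_nnnorm_deriv_le hW
      intro x
      rw [← NNReal.coe_le_coe, coe_nnnorm, Real.coe_toNNReal L hL, Real.norm_eq_abs,
        abs_le]
      exact ⟨by linarith [(hW' x).1], (hW' x).2⟩
    intro x y
    have := hlipW.dist_le_mul x y
    rw [Real.dist_eq, Real.dist_eq, Real.coe_toNNReal L hL] at this
    exact this
  -- sup over initial increments
  obtain ⟨M, hM⟩ := hw0B
  have hbdd : BddAbove (Set.range fun j : ℤ => |w 0 (j+1) - w 0 j|) := by
    refine ⟨2*M, ?_⟩
    rintro x ⟨j, rfl⟩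
    have h1 := hM (j+1); have h2 := hM j
    calc |w 0 (j+1) - w 0 j| ≤ |w 0 (j+1)| + |w 0 j| := abs_sub _ _
      _ ≤ 2*M := by linarith
  set D0 := ⨆ j : ℤ, |w 0 (j+1) - w 0 j| with hD0def
  have hD0 : ∀ i : ℤ, |w 0 (i+1) - w 0 i| ≤ D0 := fun i => le_ciSup hbdd i
  set c := 2 * L * Φ 0 / α with hc
  intro n
  induction n with
  | zero =>
    intro i
    simpa using hD0 i
  | succ n ih =>
    set B := D0 * Real.exp (c * (n * Δt)) with hB
    have hB0 : 0 ≤ B := le_trans (abs_nonneg _) (ih 0)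
    have hslope := fun j : ℤ => slopeAux W L hL hWmono hWlip (w n (j+1)) (w n j)
    choose a ha0 haL hav using hslope
    set s : ℤ → ℝ := fun j => a j * (w n (j+1) - w n j) with hs
    have hsB : ∀ j : ℤ, |s j| ≤ L * B := by
      intro j
      rw [hs]
      simp only []
      rw [abs_mul]
      exact mul_le_mul (by rw [abs_of_nonneg (ha0 j)]; exact haL j) (ih j)
        (abs_nonneg _) hL
    have hWs : ∀ j : ℤ, W (w n (j+1)) - W (w n j) = s j := hav
    have hsum : ∀ i : ℤ, Summable (fun k : ℕ => I k * s (i + (k:ℤ))) := by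
      intro i
      apply Summable.of_abs
      apply Summable.of_nonneg_of_le (fun k => abs_nonneg _) (fun k => ?_)
        (hIsum.mul_right (L*B))
      rw [abs_mul, abs_of_nonneg (hInonneg k)]
      exact mul_le_mul_of_nonneg_left (hsB _) (hInonneg k)
    have hsum2 : ∀ i : ℤ, Summable (fun k : ℕ => I (k+1) * s (i + (k:ℤ) + 1)) := by
      intro i
      have h2 := (summable_nat_add_iff 1).2 (hsum i)
      refine h2.congr fun k => ?_
      push_cast [← add_assoc]
      rfl
    have hsum3 : ∀ i : ℤ, Summable (fun k : ℕ => I k * s (i + (k:ℤ) + 1)) := by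
      intro i
      refine (hsum (i+1)).congr fun k => ?_
      rw [show i + 1 + (k:ℤ) = i + (k:ℤ) + 1 by ring]
    have hsum4 : ∀ i : ℤ, Summable (fun k : ℕ => (I k - I (k+1)) * s (i + (k:ℤ) + 1)) := by
      intro i
      refine ((hsum3 i).sub (hsum2 i)).congr fun k => ?_
      ring
    have h1 : Summable (fun k : ℕ => I (k+1)) := (summable_nat_add_iff 1).2 hIsum
    have htel : ∑' k : ℕ, (I k - I (k+1)) = I 0 := by
      rw [Summable.tsum_sub hIsum h1]
      have h2 := Summable.tsum_eq_zero_add hIsum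
      linarith [h2]
    have hdiffsum : Summable (fun k : ℕ => I k - I (k+1)) := hIsum.sub h1
    intro i
    have hkey : w (n+1) (i+1) - w (n+1) i
        = (1 - lam * (I 0 * a i)) * (w n (i+1) - w n i)
          + lam * ∑' k : ℕ, (I k - I (k+1)) * s (i + (k:ℤ) + 1) := by
      rw [hwrec n (i+1), hwrec n i]
      unfold schemeStep
      have hT1 : ∑' k : ℕ, I k * (W (w n (i+1 + (k:ℤ) + 1)) - W (w n (i+1 + (k:ℤ))))
          = ∑' k : ℕ, I k * s (i + (k:ℤ) + 1) := by
        apply tsum_congr; intro k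
        rw [show i + 1 + (k:ℤ) = i + (k:ℤ) + 1 by ring]
        rw [hWs (i + (k:ℤ) + 1)]
      have hT2 : ∑' k : ℕ, I k * (W (w n (i + (k:ℤ) + 1)) - W (w n (i + (k:ℤ))))
          = ∑' k : ℕ, I k * s (i + (k:ℤ)) := by
        apply tsum_congr; intro k
        rw [hWs (i + (k:ℤ))]
      rw [hT1, hT2]
      have hsplit : ∑' k : ℕ, I k * s (i + (k:ℤ))
          = I 0 * s i + ∑' k : ℕ, I (k+1) * s (i + (k:ℤ) + 1) := by
        rw [Summable.tsum_eq_zero_add (hsum i)]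
        simp only [Nat.cast_zero, add_zero, Nat.cast_add, Nat.cast_one]
        congr 1
        apply tsum_congr; intro k
        rw [show i + ((k:ℤ) + 1) = i + (k:ℤ) + 1 by ring]
      rw [hsplit]
      have hcomb : ∑' k : ℕ, (I k - I (k+1)) * s (i + (k:ℤ) + 1)
          = (∑' k : ℕ, I k * s (i + (k:ℤ) + 1))
            - ∑' k : ℕ, I (k+1) * s (i + (k:ℤ) + 1) := by
        rw [← Summable.tsum_sub (hsum3 i) (hsum2 i)]
        apply tsum_congr; intro k
        ring
      rw [hcomb]
      simp only [hs]
      ring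
    have hbound : ∀ k : ℕ, |(I k - I (k+1)) * s (i + (k:ℤ) + 1)|
        ≤ (I k - I (k+1)) * (L * B) := by
      intro k
      rw [abs_mul, abs_of_nonneg (sub_nonneg.2 (hImono k))]
      exact mul_le_mul_of_nonneg_left (hsB _) (sub_nonneg.2 (hImono k))
    have habs : Summable (fun k : ℕ => |(I k - I (k+1)) * s (i + (k:ℤ) + 1)|) :=
      Summable.of_nonneg_of_le (fun k => abs_nonneg _) hbound (hdiffsum.mul_right (L*B))
    have htsum_bound : |∑' k : ℕ, (I k - I (k+1)) * s (i + (k:ℤ) + 1)| ≤ I 0 * (L * B) := by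
      calc |∑' k : ℕ, (I k - I (k+1)) * s (i + (k:ℤ) + 1)|
          ≤ ∑' k : ℕ, |(I k - I (k+1)) * s (i + (k:ℤ) + 1)| := by
            have h' : Summable fun k : ℕ => ‖(I k - I (k+1)) * s (i + (k:ℤ) + 1)‖ := by
              simpa only [Real.norm_eq_abs] using habs
            simpa only [Real.norm_eq_abs] using norm_tsum_le_tsum_norm h'
        _ ≤ ∑' k : ℕ, (I k - I (k+1)) * (L * B) :=
            Summable.tsum_le_tsum hbound habs (hdiffsum.mul_right _)
        _ = (∑' k : ℕ, (I k - I (k+1))) * (L * B) := by rw [tsum_mul_right]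
        _ = I 0 * (L * B) := by rw [htel]
    have hcoef0 : 0 ≤ 1 - lam * (I 0 * a i) := by
      have hIa : I 0 * a i ≤ L := by nlinarith [hInonneg 0, haL i, ha0 i, hI0le1]
      have h1' : lam * (I 0 * a i) ≤ lam * L := mul_le_mul_of_nonneg_left hIa hlam0
      linarith [hCFL.2]
    have hstep : |w (n+1) (i+1) - w (n+1) i| ≤ B * (1 + lam * (L * I 0)) := by
      rw [hkey]
      have hA := abs_add_le ((1 - lam * (I 0 * a i)) * (w n (i+1) - w n i))
        (lam * ∑' k : ℕ, (I k - I (k+1)) * s (i + (k:ℤ) + 1))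
      have hB1 : |(1 - lam * (I 0 * a i)) * (w n (i+1) - w n i)|
          ≤ (1 - lam * (I 0 * a i)) * B := by
        rw [abs_mul, abs_of_nonneg hcoef0]
        exact mul_le_mul_of_nonneg_left (ih i) hcoef0
      have hB2 : |lam * ∑' k : ℕ, (I k - I (k+1)) * s (i + (k:ℤ) + 1)|
          ≤ lam * (I 0 * (L * B)) := by
        rw [abs_mul, abs_of_nonneg hlam0]
        exact mul_le_mul_of_nonneg_left htsum_bound hlam0
      have hprod : 0 ≤ lam * (I 0 * a i) * B :=
        mul_nonneg (mul_nonneg hlam0 (mul_nonneg (hInonneg 0) (ha0 i))) hB0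
      nlinarith [hA, hB1, hB2, hprod]
    have hfactor : 1 + lam * (L * I 0) ≤ Real.exp (c * Δt) := by
      have h3 : lam * Δz = Δt := by rw [hlam]; field_simp
      have hx0 : (0:ℝ) ≤ Δt * L * Φ 0 / α := by positivity
      have h1' : lam * (L * I 0) ≤ Δt * L * Φ 0 / α := by
        have h2' : lam * L * I 0 ≤ lam * L * (Δz * Φ 0 / α) :=
          mul_le_mul_of_nonneg_left hI0le hCFL.1
        calc lam * (L * I 0) = lam * L * I 0 := by ring
          _ ≤ lam * L * (Δz * Φ 0 / α) := h2'
          _ = (lam * Δz) * L * Φ 0 / α := by ring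
          _ = Δt * L * Φ 0 / α := by rw [h3]
      have h4 : Δt * L * Φ 0 / α ≤ c * Δt := by
        have hceq : c * Δt = 2 * (Δt * L * Φ 0 / α) := by rw [hc]; ring
        linarith
      calc 1 + lam * (L * I 0) ≤ 1 + Δt * L * Φ 0 / α := by linarith
        _ ≤ Real.exp (Δt * L * Φ 0 / α) := by
            linarith [Real.add_one_le_exp (Δt * L * Φ 0 / α)]
        _ ≤ Real.exp (c * Δt) := Real.exp_le_exp.2 h4
    have hrhs : D0 * Real.exp (c * (((n:ℕ)+1 : ℕ) * Δt)) = B * Real.exp (c * Δt) := by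
      rw [hB]
      push_cast
      rw [show c * (((n:ℝ)+1) * Δt) = c * ((n:ℝ) * Δt) + c * Δt by ring, Real.exp_add]
      ring
    calc |w (n+1) (i+1) - w (n+1) i| ≤ B * (1 + lam * (L * I 0)) := hstep
      _ ≤ B * Real.exp (c * Δt) := mul_le_mul_of_nonneg_left hfactor hB0
      _ = D0 * Real.exp (c * (((n:ℕ)+1 : ℕ) * Δt)) := hrhs.symm
end

section
/- Assume the CFL condition 0 ≤ λL ≤ 1 and that Φ(0) < ∞. Let w⁰ : ℤ → ℝ be bounded, w^{n+1} = G(w^n), and set (Δŵ)⁰ = sup_{i∈ℤ} |w⁰_{i+1} − w⁰_i|. Then for every n ≥ 0 and every i ∈ ℤ, |w^{n+1}_i − w^n_i| ≤ λ L (Δŵ)⁰ · exp( (2 L Φ(0)/α) · nΔt ). -/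
open MeasureTheory

lemma slope_aux (W : ℝ → ℝ) (L : ℝ) (hW : Differentiable ℝ W)
    (hW' : ∀ x, 0 ≤ deriv W x ∧ deriv W x ≤ L) (a b : ℝ) :
    ∃ c, 0 ≤ c ∧ c ≤ L ∧ W b - W a = c * (b - a) := by
  rcases lt_trichotomy a b with h | h | h
  · obtain ⟨c, _, hc⟩ := exists_hasDerivAt_eq_slope W (deriv W) h
      (hW.continuous.continuousOn) (fun x _ => (hW x).hasDerivAt)
    refine ⟨deriv W c, (hW' c).1, (hW' c).2, ?_⟩
    rw [hc, div_mul_eq_mul_div, eq_div_iff (sub_ne_zero.mpr h.ne')]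
  · exact ⟨0, le_rfl, (hW' 0).1.trans (hW' 0).2, by simp [h]⟩
  · obtain ⟨c, _, hc⟩ := exists_hasDerivAt_eq_slope W (deriv W) h
      (hW.continuous.continuousOn) (fun x _ => (hW x).hasDerivAt)
    refine ⟨deriv W c, (hW' c).1, (hW' c).2, ?_⟩
    rw [hc, div_mul_eq_mul_div, eq_div_iff (sub_ne_zero.mpr h.ne')]
    ring


lemma Ifacts (Φ : ℝ → ℝ) (α Δz : ℝ) (hα : 0 < α) (hΔz : 0 < Δz)
    (hΦnonneg : ∀ z : ℝ, 0 ≤ z → 0 ≤ Φ z)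
    (hΦmono : ∀ x y : ℝ, 0 ≤ x → x ≤ y → Φ y ≤ Φ x)
    (hΦmass : ∫ ζ in Set.Ioi (0:ℝ), Φ ζ = 1)
    (I : ℕ → ℝ)
    (hI : ∀ k : ℕ, I k = ∫ ζ in ((k : ℝ) * Δz)..(((k : ℝ) + 1) * Δz), (1/α) * Φ (ζ/α)) :
    (∀ k, 0 ≤ I k) ∧ Summable I ∧ (∑' k, I k) ≤ 1 ∧ I 0 ≤ Δz * Φ 0 / α ∧ (∀ k, I (k+1) ≤ I k) := by
  set f : ℝ → ℝ := fun ζ => (1/α) * Φ (ζ/α) with hf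
  have hfnn : ∀ ζ : ℝ, 0 ≤ ζ → 0 ≤ f ζ := fun ζ hζ => by
    have := hΦnonneg (ζ/α) (div_nonneg hζ hα.le); positivity
  have hfanti : AntitoneOn f (Set.Ici 0) := by
    intro x hx y hy hxy
    have : Φ (y/α) ≤ Φ (x/α) := hΦmono _ _ (div_nonneg hx hα.le) (by gcongr)
    have h1α : (0:ℝ) ≤ 1/α := by positivity
    exact mul_le_mul_of_nonneg_left this h1α
  have hfii : ∀ a b : ℝ, 0 ≤ a → 0 ≤ b → IntervalIntegrable f volume a b := by
    intro a b ha hb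
    refine (hfanti.mono ?_).intervalIntegrable
    intro x hx
    exact le_trans (le_min ha hb) hx.1
  have hΦint : IntegrableOn Φ (Set.Ioi (0:ℝ)) := by
    by_contra h
    rw [integral_undef h] at hΦmass
    exact one_ne_zero hΦmass.symm
  -- ∫_0^T f ≤ 1 for T ≥ 0
  have hfle1 : ∀ T : ℝ, 0 ≤ T → (∫ ζ in (0:ℝ)..T, f ζ) ≤ 1 := by
    intro T hT
    have hcomp : (∫ ζ in (0:ℝ)..T, f ζ) = ∫ ζ in (0:ℝ)..(T/α), Φ ζ := by
      rw [hf]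
      rw [intervalIntegral.integral_const_mul]
      rw [intervalIntegral.integral_comp_div (c := α) Φ hα.ne']
      simp [smul_eq_mul]
      field_simp
    rw [hcomp]
    rw [intervalIntegral.integral_of_le (by positivity)]
    calc ∫ ζ in Set.Ioc (0:ℝ) (T/α), Φ ζ
        ≤ ∫ ζ in Set.Ioi (0:ℝ), Φ ζ := by
          refine setIntegral_mono_set hΦint ?_ ?_
          · filter_upwards [ae_restrict_mem measurableSet_Ioi] with x hx
            exact hΦnonneg x (le_of_lt hx)
          · exact Filter.Eventually.of_forall (fun x hx => hx.1)
      _ = 1 := hΦmass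
  have hInn : ∀ k, 0 ≤ I k := by
    intro k
    rw [hI k]
    refine intervalIntegral.integral_nonneg (by nlinarith [Nat.cast_nonneg (α := ℝ) k]) ?_
    intro u hu
    exact hfnn u (le_trans (by positivity) hu.1)
  have hpart : ∀ N : ℕ, ∑ k ∈ Finset.range N, I k = ∫ ζ in (0:ℝ)..((N:ℝ)*Δz), f ζ := by
    intro N
    have := intervalIntegral.sum_integral_adjacent_intervals (μ := volume) (f := f)
      (a := fun k : ℕ => (k:ℝ) * Δz) (n := N) ?_
    · simp only [Nat.cast_zero, zero_mul] at this
      rw [← this]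
      refine Finset.sum_congr rfl (fun k _ => ?_)
      rw [hI k]
      congr 1 <;> push_cast <;> ring
    · intro k _
      refine hfii _ _ (by positivity) (by positivity)
  have hsumI : Summable I := by
    refine summable_of_sum_range_le (c := 1) hInn (fun N => ?_)
    rw [hpart N]; exact hfle1 _ (by positivity)
  have htsumI : (∑' k, I k) ≤ 1 :=
    Summable.tsum_le_of_sum_range_le hsumI (fun N => by rw [hpart N]; exact hfle1 _ (by positivity))
  have hI0 : I 0 ≤ Δz * Φ 0 / α := by
    have h0 : I 0 = ∫ ζ in (0:ℝ)..Δz, f ζ := by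
      rw [hI 0]; congr 1 <;> push_cast <;> ring
    rw [h0]
    have h1 : (∫ ζ in (0:ℝ)..Δz, f ζ) ≤ ∫ _ in (0:ℝ)..Δz, (1/α) * Φ 0 := by
      refine intervalIntegral.integral_mono_on hΔz.le (hfii _ _ le_rfl hΔz.le)
        (intervalIntegrable_const) ?_
      intro x hx
      exact mul_le_mul_of_nonneg_left (hΦmono 0 (x/α) le_rfl (div_nonneg hx.1 hα.le)) (by positivity)
    rw [intervalIntegral.integral_const] at h1
    calc (∫ ζ in (0:ℝ)..Δz, f ζ) ≤ _ := h1
      _ = Δz * Φ 0 / α := by simp [smul_eq_mul]; ring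
  have hIanti : ∀ k, I (k+1) ≤ I k := by
    intro k
    have hshift : I (k+1) = ∫ ζ in ((k:ℝ)*Δz)..(((k:ℝ)+1)*Δz), f (ζ + Δz) := by
      rw [hI (k+1), intervalIntegral.integral_comp_add_right f Δz]
      congr 1 <;> push_cast <;> ring
    rw [hshift, hI k]
    refine intervalIntegral.integral_mono_on (by nlinarith [Nat.cast_nonneg (α := ℝ) k]) ?_ (hfii _ _ (by positivity) (by positivity)) ?_
    · have : AntitoneOn (fun ζ => f (ζ + Δz)) (Set.Ici 0) := by
        intro x hx y hy hxy
        exact hfanti (by simp; linarith [hx.out]) (by simp; linarith [hy.out]) (by linarith)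
      refine (this.mono ?_).intervalIntegrable
      intro x hx
      exact le_trans (le_min (by positivity) (by positivity)) hx.1
    · intro x hx
      have hx0 : (0:ℝ) ≤ x := le_trans (by positivity) hx.1
      exact hfanti hx0 (by simp; linarith) (by linarith)
  exact ⟨hInn, hsumI, htsumI, hI0, hIanti⟩

/-- under the CFL condition `0 ≤ λL ≤ 1`, the discrete time
increments of the filtered-scheme iterates satisfy
`|w^{n+1}_i − w^n_i| ≤ λL (Δŵ)⁰ exp((2LΦ(0)/α) nΔt)`. -/
theorem stmt_6
    (Φ : ℝ → ℝ) (α Δz Δt lam L : ℝ)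
    (hα : 0 < α) (hΔz : 0 < Δz) (hΔt : 0 < Δt) (hlam : lam = Δt / Δz)
    (hΦnonneg : ∀ z : ℝ, 0 ≤ z → 0 ≤ Φ z)
    (hΦmono : ∀ x y : ℝ, 0 ≤ x → x ≤ y → Φ y ≤ Φ x)
    (hΦmass : ∫ ζ in Set.Ioi (0:ℝ), Φ ζ = 1)
    (hΦmom : IntegrableOn (fun ζ => ζ * Φ ζ) (Set.Ioi (0:ℝ)))
    (W : ℝ → ℝ) (hW : Differentiable ℝ W)
    (hW' : ∀ x : ℝ, 0 ≤ deriv W x ∧ deriv W x ≤ L)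
    (hCFL : 0 ≤ lam * L ∧ lam * L ≤ 1)
    (I : ℕ → ℝ)
    (hI : ∀ k : ℕ, I k = ∫ ζ in ((k : ℝ) * Δz)..(((k : ℝ) + 1) * Δz), (1/α) * Φ (ζ/α))
    (w : ℕ → ℤ → ℝ)
    (hw0B : ∃ M, ∀ i, |w 0 i| ≤ M)
    (hwrec : ∀ n : ℕ, ∀ i : ℤ, w (n+1) i = schemeStep I W lam (w n) i) :
    ∀ n : ℕ, ∀ i : ℤ,
      |w (n+1) i - w n i| ≤
        lam * L * (⨆ j : ℤ, |w 0 (j+1) - w 0 j|) *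
          Real.exp ((2 * L * Φ 0 / α) * (n * Δt)) := by
  obtain ⟨hInn, hsumI, htsumI, hI0le, hIanti⟩ :=
    Ifacts Φ α Δz hα hΔz hΦnonneg hΦmono hΦmass I hI
  have hΔz' : Δz ≠ 0 := hΔz.ne'
  have hlam0 : 0 ≤ lam := by rw [hlam]; positivity
  have hlamz : lam * Δz = Δt := by rw [hlam]; field_simp
  have hL : 0 ≤ L := (hW' 0).1.trans (hW' 0).2
  have hΦ0 : 0 ≤ Φ 0 := hΦnonneg 0 le_rfl
  have hWlip : ∀ a b : ℝ, |W b - W a| ≤ L * |b - a| := by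
    intro a b
    obtain ⟨c, hc0, hcL, hce⟩ := slope_aux W L hW hW' a b
    rw [hce, abs_mul, abs_of_nonneg hc0]
    exact mul_le_mul_of_nonneg_right hcL (abs_nonneg _)
  have hI0le1 : I 0 ≤ 1 :=
    le_trans (Summable.le_tsum hsumI 0 (fun j _ => hInn j)) htsumI
  have habs2 : ∀ a b : ℝ, |a - b| ≤ |a| + |b| := by
    intro a b
    rw [sub_eq_add_neg]
    exact (abs_add_le _ _).trans (by rw [abs_neg])
  -- generic summability / tsum bounds
  have sumOf : ∀ (g : ℕ → ℝ) (C : ℝ), (∀ k, |g k| ≤ I k * C) → Summable g := by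
    intro g C hg
    exact Summable.of_abs
      (Summable.of_nonneg_of_le (fun k => abs_nonneg _) hg (hsumI.mul_right C))
  have tsumB : ∀ (g : ℕ → ℝ) (C : ℝ), 0 ≤ C → (∀ k, |g k| ≤ I k * C) →
      |∑' k, g k| ≤ C := by
    intro g C hC hg
    have h := tsum_of_norm_bounded (f := g) (g := fun k => I k * C)
      (hsumI.hasSum.mul_right C) (by simpa [Real.norm_eq_abs] using hg)
    calc |∑' k, g k| = ‖∑' k, g k‖ := (Real.norm_eq_abs _).symm
      _ ≤ (∑' k, I k) * C := h
      _ ≤ 1 * C := mul_le_mul_of_nonneg_right htsumI hC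
      _ = C := one_mul C
  -- boundedness of all iterates
  have hbdd : ∀ n : ℕ, ∃ M, 0 ≤ M ∧ ∀ i, |w n i| ≤ M := by
    intro n
    induction n with
    | zero =>
      obtain ⟨M, hM⟩ := hw0B
      exact ⟨M, le_trans (abs_nonneg _) (hM 0), hM⟩
    | succ n ih =>
      obtain ⟨M, hM0, hM⟩ := ih
      refine ⟨M + lam * (2*L*M), by positivity, fun i => ?_⟩
      rw [hwrec n i]
      simp only [schemeStep]
      have hterm : ∀ k : ℕ,
          |I k * (W (w n (i + (k:ℤ) + 1)) - W (w n (i + (k:ℤ))))| ≤ I k * (2*L*M) := by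
        intro k
        rw [abs_mul, abs_of_nonneg (hInn k)]
        refine mul_le_mul_of_nonneg_left ?_ (hInn k)
        calc |W (w n (i + (k:ℤ) + 1)) - W (w n (i + (k:ℤ)))|
            ≤ L * |w n (i + (k:ℤ) + 1) - w n (i + (k:ℤ))| := hWlip _ _
          _ ≤ L * (M + M) :=
              mul_le_mul_of_nonneg_left ((habs2 _ _).trans (add_le_add (hM _) (hM _))) hL
          _ = 2*L*M := by ring
      have htb := tsumB _ (2*L*M) (by positivity) hterm
      calc |w n i + lam * ∑' (k:ℕ), I k * (W (w n (i + (k:ℤ) + 1)) - W (w n (i + (k:ℤ))))|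
          ≤ |w n i| + |lam * ∑' (k:ℕ), I k * (W (w n (i + (k:ℤ) + 1)) - W (w n (i + (k:ℤ))))| :=
            abs_add_le _ _
        _ ≤ M + lam * (2*L*M) := by
            refine add_le_add (hM i) ?_
            rw [abs_mul, abs_of_nonneg hlam0]
            exact mul_le_mul_of_nonneg_left htb hlam0
  set S := ⨆ j : ℤ, |w 0 (j+1) - w 0 j| with hSdef
  have hSbdd : BddAbove (Set.range fun j : ℤ => |w 0 (j+1) - w 0 j|) := by
    obtain ⟨M, hM⟩ := hw0B
    refine ⟨M + M, ?_⟩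
    rintro x ⟨j, rfl⟩
    exact (habs2 _ _).trans (add_le_add (hM _) (hM _))
  have hSle : ∀ j : ℤ, |w 0 (j+1) - w 0 j| ≤ S := fun j => le_ciSup hSbdd j
  have hSnn : (0:ℝ) ≤ S := le_trans (abs_nonneg _) (hSle 0)
  have hY : (0:ℝ) ≤ 1 + lam * L * I 0 := by nlinarith [hInn 0, hCFL.1]
  -- key induction
  have key : ∀ n : ℕ, ∀ i : ℤ,
      |w (n+1) i - w n i| ≤ lam * L * S * (1 + lam * L * I 0)^n := by
    intro n
    induction n with
    | zero =>
      intro i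
      rw [hwrec 0 i]
      simp only [schemeStep, pow_zero, mul_one, add_sub_cancel_left]
      have hterm : ∀ k : ℕ,
          |I k * (W (w 0 (i + (k:ℤ) + 1)) - W (w 0 (i + (k:ℤ))))| ≤ I k * (L * S) := by
        intro k
        rw [abs_mul, abs_of_nonneg (hInn k)]
        refine mul_le_mul_of_nonneg_left ?_ (hInn k)
        exact (hWlip _ _).trans (mul_le_mul_of_nonneg_left (hSle (i + (k:ℤ))) hL)
      have htb := tsumB _ (L * S) (by positivity) hterm
      rw [abs_mul, abs_of_nonneg hlam0]
      calc lam * |∑' (k:ℕ), I k * (W (w 0 (i + (k:ℤ) + 1)) - W (w 0 (i + (k:ℤ))))|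
          ≤ lam * (L * S) := mul_le_mul_of_nonneg_left htb hlam0
        _ = lam * L * S := by ring
    | succ n ih =>
      intro i
      obtain ⟨Mn, hMn0, hMn⟩ := hbdd n
      obtain ⟨Mn1, hMn10, hMn1⟩ := hbdd (n+1)
      set Bn := lam * L * S * (1 + lam * L * I 0)^n with hBndef
      have hBn0 : 0 ≤ Bn := by
        rw [hBndef]
        exact mul_nonneg (mul_nonneg (mul_nonneg hlam0 hL) hSnn) (pow_nonneg hY n)
      obtain ⟨c, hc⟩ := Classical.axiomOfChoice
        (fun j : ℤ => slope_aux W L hW hW' (w n j) (w (n+1) j))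
      have hc0 : ∀ j, 0 ≤ c j := fun j => (hc j).1
      have hcL : ∀ j, c j ≤ L := fun j => (hc j).2.1
      have hcE : ∀ j, W (w (n+1) j) - W (w n j) = c j * (w (n+1) j - w n j) :=
        fun j => (hc j).2.2
      have hE : ∀ j : ℤ, |W (w (n+1) j) - W (w n j)| ≤ L * Bn := by
        intro j
        rw [hcE j, abs_mul, abs_of_nonneg (hc0 j)]
        exact mul_le_mul (hcL j) (ih j) (abs_nonneg _) hL
      -- named tsums
      set TA := ∑' k:ℕ, I k * (W (w (n+1) (i + (k:ℤ) + 1)) - W (w (n+1) (i + (k:ℤ)))) with hTA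
      set TB := ∑' k:ℕ, I k * (W (w n (i + (k:ℤ) + 1)) - W (w n (i + (k:ℤ)))) with hTB
      set P := ∑' k:ℕ, I k * (W (w (n+1) (i + (k:ℤ) + 1)) - W (w n (i + (k:ℤ) + 1))) with hP
      set Q := ∑' k:ℕ, I k * (W (w (n+1) (i + (k:ℤ))) - W (w n (i + (k:ℤ)))) with hQ
      set Q' := ∑' k:ℕ, I (k+1) * (W (w (n+1) (i + (k:ℤ) + 1)) - W (w n (i + (k:ℤ) + 1))) with hQ'
      set R := ∑' k:ℕ, (I k - I (k+1)) * (W (w (n+1) (i + (k:ℤ) + 1)) - W (w n (i + (k:ℤ) + 1))) with hR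
      -- summability
      have bW : ∀ (m : ℕ) (Mm : ℝ), (∀ j, |w m j| ≤ Mm) → ∀ a b : ℤ,
          |W (w m a) - W (w m b)| ≤ L * (Mm + Mm) := by
        intro m Mm hMm a b
        exact (hWlip _ _).trans
          (mul_le_mul_of_nonneg_left ((habs2 _ _).trans (add_le_add (hMm _) (hMm _))) hL)
      have hSA : Summable (fun k:ℕ => I k * (W (w (n+1) (i + (k:ℤ) + 1)) - W (w (n+1) (i + (k:ℤ))))) := by
        refine sumOf _ (L * (Mn1 + Mn1)) (fun k => ?_)
        rw [abs_mul, abs_of_nonneg (hInn k)]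
        exact mul_le_mul_of_nonneg_left (bW (n+1) Mn1 hMn1 _ _) (hInn k)
      have hSB : Summable (fun k:ℕ => I k * (W (w n (i + (k:ℤ) + 1)) - W (w n (i + (k:ℤ))))) := by
        refine sumOf _ (L * (Mn + Mn)) (fun k => ?_)
        rw [abs_mul, abs_of_nonneg (hInn k)]
        exact mul_le_mul_of_nonneg_left (bW n Mn hMn _ _) (hInn k)
      have hSP : Summable (fun k:ℕ => I k * (W (w (n+1) (i + (k:ℤ) + 1)) - W (w n (i + (k:ℤ) + 1)))) := by
        refine sumOf _ (L * Bn) (fun k => ?_)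
        rw [abs_mul, abs_of_nonneg (hInn k)]
        exact mul_le_mul_of_nonneg_left (hE _) (hInn k)
      have hSQ : Summable (fun k:ℕ => I k * (W (w (n+1) (i + (k:ℤ))) - W (w n (i + (k:ℤ))))) := by
        refine sumOf _ (L * Bn) (fun k => ?_)
        rw [abs_mul, abs_of_nonneg (hInn k)]
        exact mul_le_mul_of_nonneg_left (hE _) (hInn k)
      have hSQ' : Summable (fun k:ℕ => I (k+1) * (W (w (n+1) (i + (k:ℤ) + 1)) - W (w n (i + (k:ℤ) + 1)))) := by
        refine sumOf _ (L * Bn) (fun k => ?_)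
        rw [abs_mul, abs_of_nonneg (hInn (k+1))]
        calc I (k+1) * |W (w (n+1) (i + (k:ℤ) + 1)) - W (w n (i + (k:ℤ) + 1))|
            ≤ I (k+1) * (L * Bn) := mul_le_mul_of_nonneg_left (hE _) (hInn (k+1))
          _ ≤ I k * (L * Bn) :=
            mul_le_mul_of_nonneg_right (hIanti k) (by positivity)
      -- identities
      have e1 : TA = TB + (P - Q) := by
        rw [hTA, hTB, hP, hQ, ← Summable.tsum_sub hSP hSQ, ← Summable.tsum_add hSB (hSP.sub hSQ)]
        exact tsum_congr (fun k => by ring)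
      have e3 : Q = I 0 * (W (w (n+1) i) - W (w n i)) + Q' := by
        rw [hQ, hQ', Summable.tsum_eq_zero_add hSQ]
        congr 1
        · norm_num
        · refine tsum_congr (fun k => ?_)
          have : i + ((k:ℤ) + 1) = i + (k:ℤ) + 1 := by ring
          rw [Nat.cast_add, Nat.cast_one, this]
      have e4 : P - Q' = R := by
        rw [hP, hQ', hR, ← Summable.tsum_sub hSP hSQ']
        exact tsum_congr (fun k => by ring)
      have hstep2 : w (n+1+1) i - w (n+1) i = lam * TA := by
        rw [hwrec (n+1) i]
        simp only [schemeStep]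
        rw [← hTA]
        ring
      have hstep1 : w (n+1) i - w n i = lam * TB := by
        rw [hwrec n i]
        simp only [schemeStep]
        rw [← hTB]
        ring
      have hM : w (n+1+1) i - w (n+1) i
          = (1 - lam * I 0 * c i) * (w (n+1) i - w n i) + lam * R := by
        calc w (n+1+1) i - w (n+1) i = lam * TA := hstep2
          _ = lam * (TB + (P - (I 0 * (W (w (n+1) i) - W (w n i)) + Q'))) := by
              rw [e1, ← e3]
          _ = lam * TB - lam * I 0 * (W (w (n+1) i) - W (w n i)) + lam * (P - Q') := by ring
          _ = (w (n+1) i - w n i) - lam * I 0 * (c i * (w (n+1) i - w n i)) + lam * R := by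
              rw [← hstep1, ← hcE i, e4]
          _ = (1 - lam * I 0 * c i) * (w (n+1) i - w n i) + lam * R := by ring
      -- bounds
      have hx0 : 0 ≤ lam * I 0 * c i :=
        mul_nonneg (mul_nonneg hlam0 (hInn 0)) (hc0 i)
      have hx1 : lam * I 0 * c i ≤ 1 := by
        have h1 : lam * I 0 * c i ≤ lam * I 0 * L :=
          mul_le_mul_of_nonneg_left (hcL i) (mul_nonneg hlam0 (hInn 0))
        nlinarith [hCFL.2, hI0le1, hInn 0, hlam0, hL]
      have hpart1 : |(1 - lam * I 0 * c i) * (w (n+1) i - w n i)| ≤ Bn := by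
        rw [abs_mul]
        calc |1 - lam * I 0 * c i| * |w (n+1) i - w n i|
            ≤ 1 * Bn := by
              refine mul_le_mul ?_ (ih i) (abs_nonneg _) zero_le_one
              rw [abs_le]
              constructor <;> linarith
          _ = Bn := one_mul _
      -- bound on R
      have hshiftI : Summable (fun k => I (k+1)) := (summable_nat_add_iff 1).2 hsumI
      have hts : ∑' k:ℕ, (I k - I (k+1)) = I 0 := by
        rw [Summable.tsum_sub hsumI hshiftI]
        have h := Summable.tsum_eq_zero_add hsumI
        linarith
      have hbb : HasSum (fun k:ℕ => (I k - I (k+1)) * (L * Bn)) (I 0 * (L * Bn)) := by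
        have h := (hsumI.sub hshiftI).hasSum.mul_right (L * Bn)
        rwa [hts] at h
      have hRb : |R| ≤ I 0 * (L * Bn) := by
        rw [hR]
        have h := tsum_of_norm_bounded hbb (f := fun k:ℕ =>
            (I k - I (k+1)) * (W (w (n+1) (i + (k:ℤ) + 1)) - W (w n (i + (k:ℤ) + 1)))) ?_
        · simpa [Real.norm_eq_abs] using h
        · intro k
          rw [Real.norm_eq_abs, abs_mul, abs_of_nonneg (sub_nonneg.2 (hIanti k))]
          exact mul_le_mul_of_nonneg_left (hE _) (sub_nonneg.2 (hIanti k))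
      calc |w (n+1+1) i - w (n+1) i|
          = |(1 - lam * I 0 * c i) * (w (n+1) i - w n i) + lam * R| := by rw [hM]
        _ ≤ |(1 - lam * I 0 * c i) * (w (n+1) i - w n i)| + |lam * R| := abs_add_le _ _
        _ ≤ Bn + lam * (I 0 * (L * Bn)) := by
            refine add_le_add hpart1 ?_
            rw [abs_mul, abs_of_nonneg hlam0]
            exact mul_le_mul_of_nonneg_left hRb hlam0
        _ = lam * L * S * (1 + lam * L * I 0)^(n+1) := by
            rw [hBndef]; ring
  -- conclude
  intro n i
  calc |w (n+1) i - w n i| ≤ lam * L * S * (1 + lam * L * I 0)^n := key n i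
    _ ≤ lam * L * S * Real.exp ((2 * L * Φ 0 / α) * (n * Δt)) := by
        refine mul_le_mul_of_nonneg_left ?_ (mul_nonneg hCFL.1 hSnn)
        calc (1 + lam * L * I 0)^n ≤ (Real.exp (lam * L * I 0))^n := by
              refine pow_le_pow_left₀ hY ?_ n
              linarith [Real.add_one_le_exp (lam * L * I 0)]
          _ = Real.exp ((n:ℝ) * (lam * L * I 0)) := by
              rw [Real.exp_nat_mul]
          _ ≤ Real.exp ((2 * L * Φ 0 / α) * (n * Δt)) := by
              refine Real.exp_le_exp.mpr ?_
              have h1 : lam * L * I 0 ≤ L * Φ 0 / α * Δt := by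
                have h2 := mul_le_mul_of_nonneg_left hI0le hCFL.1
                calc lam * L * I 0 = lam * L * I 0 := rfl
                  _ ≤ lam * L * (Δz * Φ 0 / α) := h2
                  _ = L * Φ 0 / α * (lam * Δz) := by ring
                  _ = L * Φ 0 / α * Δt := by rw [hlamz]
              have h2 : (0:ℝ) ≤ (L * Φ 0 / α) * ((n:ℝ) * Δt) := by positivity
              have h3 : (n:ℝ) * (lam * L * I 0) ≤ (n:ℝ) * (L * Φ 0 / α * Δt) :=
                mul_le_mul_of_nonneg_left h1 (Nat.cast_nonneg (α := ℝ) n)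
              have h4 : (n:ℝ) * (L * Φ 0 / α * Δt) = (L * Φ 0 / α) * ((n:ℝ) * Δt) := by ring
              have h5 : (2 * L * Φ 0 / α) * ((n:ℝ) * Δt)
                  = 2 * ((L * Φ 0 / α) * ((n:ℝ) * Δt)) := by ring
              rw [h5]
              linarith
end

section
/- Assume the CFL condition 0 ≤ λL ≤ 1. Let y⁰ : ℤ → ℝ be a bounded sequence and define the iterates of the upwind scheme for the spacing variable by y^{n+1}_i = y^n_i + λ ( W(w^n_{i+1}) − W(w^n_i) ), where w^n_i = Σ_{j≥i} I_{j−i} y^n_j. Then for every α > 0, every i ∈ ℤ and every n ≥ 0, inf_{j∈ℤ} y⁰_j ≤ y^n_i ≤ sup_{j∈ℤ} y⁰_j. -/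
open MeasureTheory

/-- Core step bound: one step of the scheme stays within `[m, S]`. -/
lemma step_bound (I : ℕ → ℝ) (hnn : ∀ k, 0 ≤ I k) (hanti : ∀ k, I (k+1) ≤ I k)
    (hsum : Summable I) (hI0 : I 0 ≤ 1) (d : ℝ) (hd0 : 0 ≤ d) (hd1 : d ≤ 1)
    (y : ℤ → ℝ) (m S : ℝ) (hm : ∀ j, m ≤ y j) (hS : ∀ j, y j ≤ S) (i : ℤ) :
    m ≤ y i + d * (discAvg I y (i+1) - discAvg I y i) ∧
      y i + d * (discAvg I y (i+1) - discAvg I y i) ≤ S := by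
  set B := max |m| |S| with hB
  have hyB : ∀ j, |y j| ≤ B := by
    intro j
    rw [abs_le]
    constructor
    · have h1 : -B ≤ -|m| := neg_le_neg (le_max_left _ _)
      have h2 : -|m| ≤ m := neg_abs_le m
      linarith [hm j]
    · have h1 : |S| ≤ B := le_max_right _ _
      have h2 : S ≤ |S| := le_abs_self S
      linarith [hS j]
  have hsummW : ∀ (J : ℕ → ℝ), Summable J → (∀ k, 0 ≤ J k) → ∀ g : ℕ → ℤ,
      Summable (fun k => J k * y (g k)) := by
    intro J hJ hJnn g
    apply Summable.of_abs
    refine Summable.of_nonneg_of_le (fun k => abs_nonneg _) (fun k => ?_) (hJ.mul_right B)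
    rw [abs_mul, abs_of_nonneg (hJnn k)]
    exact mul_le_mul_of_nonneg_left (hyB _) (hJnn k)
  have hsucc : Summable (fun k => I (k+1)) := (summable_nat_add_iff 1).2 hsum
  have hJnn : ∀ k, 0 ≤ I k - I (k+1) := fun k => sub_nonneg.2 (hanti k)
  have hJS : Summable (fun k => I k - I (k+1)) := hsum.sub hsucc
  have hJtsum : ∑' k, (I k - I (k+1)) = I 0 := by
    rw [Summable.tsum_sub hsum hsucc]
    have h0 := Summable.tsum_eq_zero_add hsum
    linarith
  have key : discAvg I y i = I 0 * y i + ∑' k, I (k+1) * y (i+1+k) := by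
    rw [discAvg, Summable.tsum_eq_zero_add (hsummW I hsum hnn (fun k => i + (k : ℤ)))]
    norm_num
    exact tsum_congr fun k => by
      congr 1
      ring
  have hdiff : discAvg I y (i+1) - discAvg I y i
      = (∑' k, (I k - I (k+1)) * y (i+1+k)) - I 0 * y i := by
    have hw1 : discAvg I y (i+1) = ∑' k, I k * y (i+1+(k:ℤ)) := rfl
    have hsub : (∑' k, (I k - I (k+1)) * y (i+1+(k:ℤ)))
        = (∑' k, I k * y (i+1+(k:ℤ))) - ∑' k, I (k+1) * y (i+1+(k:ℤ)) := by
      rw [← Summable.tsum_sub (hsummW I hsum hnn (fun k => i+1+(k:ℤ)))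
        (hsummW (fun k => I (k+1)) hsucc (fun k => hnn _) (fun k => i+1+(k:ℤ)))]
      exact tsum_congr fun k => by ring
    rw [key, hw1, hsub]
    ring
  set A := ∑' k, (I k - I (k+1)) * y (i+1+(k:ℤ)) with hA
  have hAub : A ≤ I 0 * S := by
    calc A ≤ ∑' k, (I k - I (k+1)) * S :=
          Summable.tsum_le_tsum (fun k => mul_le_mul_of_nonneg_left (hS _) (hJnn k))
            (hsummW _ hJS hJnn _) (hJS.mul_right S)
      _ = I 0 * S := by rw [tsum_mul_right, hJtsum]
  have hAlb : I 0 * m ≤ A := by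
    calc I 0 * m = ∑' k, (I k - I (k+1)) * m := by rw [tsum_mul_right, hJtsum]
      _ ≤ A := Summable.tsum_le_tsum (fun k => mul_le_mul_of_nonneg_left (hm _) (hJnn k))
            (hJS.mul_right m) (hsummW _ hJS hJnn _)
  have hdI0 : d * I 0 ≤ 1 := by
    calc d * I 0 ≤ 1 * 1 := mul_le_mul hd1 hI0 (hnn 0) zero_le_one
      _ = 1 := one_mul 1
  have expand : y i + d * (discAvg I y (i+1) - discAvg I y i)
      = (1 - d * I 0) * y i + d * A := by rw [hdiff]; ring
  have h1 : 0 ≤ 1 - d * I 0 := by linarith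
  constructor
  · rw [expand]
    calc m = (1 - d * I 0) * m + d * (I 0 * m) := by ring
      _ ≤ (1 - d * I 0) * y i + d * A :=
        add_le_add (mul_le_mul_of_nonneg_left (hm i) h1) (mul_le_mul_of_nonneg_left hAlb hd0)
  · rw [expand]
    calc (1 - d * I 0) * y i + d * A ≤ (1 - d * I 0) * S + d * (I 0 * S) :=
        add_le_add (mul_le_mul_of_nonneg_left (hS i) h1) (mul_le_mul_of_nonneg_left hAub hd0)
      _ = S := by ring

/-- under the CFL condition `0 ≤ λL ≤ 1`, the upwind scheme for
the spacing variable `y^{n+1}_i = y^n_i + λ(W(w^n_{i+1}) − W(w^n_i))`, where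
`w^n = discAvg I y^n`, satisfies the maximum principle
`inf y⁰ ≤ y^n_i ≤ sup y⁰` for every filter size `α > 0`. -/
theorem stmt_8
    (Φ : ℝ → ℝ) (α Δz Δt lam L : ℝ)
    (hα : 0 < α) (hΔz : 0 < Δz) (hΔt : 0 < Δt) (hlam : lam = Δt / Δz)
    (hΦnonneg : ∀ z : ℝ, 0 ≤ z → 0 ≤ Φ z)
    (hΦmono : ∀ x y : ℝ, 0 ≤ x → x ≤ y → Φ y ≤ Φ x)
    (hΦmass : ∫ ζ in Set.Ioi (0:ℝ), Φ ζ = 1)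
    (hΦmom : IntegrableOn (fun ζ => ζ * Φ ζ) (Set.Ioi (0:ℝ)))
    (W : ℝ → ℝ) (hW : Differentiable ℝ W)
    (hW' : ∀ x : ℝ, 0 ≤ deriv W x ∧ deriv W x ≤ L)
    (hCFL : 0 ≤ lam * L ∧ lam * L ≤ 1)
    (I : ℕ → ℝ)
    (hI : ∀ k : ℕ, I k = ∫ ζ in ((k : ℝ) * Δz)..(((k : ℝ) + 1) * Δz), (1/α) * Φ (ζ/α))
    (y : ℕ → ℤ → ℝ)
    (hy0B : ∃ M, ∀ i, |y 0 i| ≤ M)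
    (hyrec : ∀ n : ℕ, ∀ i : ℤ,
      y (n+1) i = y n i + lam * (W (discAvg I (y n) (i+1)) - W (discAvg I (y n) i))) :
    ∀ n : ℕ, ∀ i : ℤ, (⨅ j : ℤ, y 0 j) ≤ y n i ∧ y n i ≤ ⨆ j : ℤ, y 0 j := by
  set ΦA : ℝ → ℝ := fun ζ => (1/α) * Φ (ζ/α) with hΦA
  -- integrability of Φ on Ioi 0
  have hΦI : IntegrableOn Φ (Set.Ioi (0:ℝ)) := by
    by_contra h
    rw [integral_undef h] at hΦmass
    norm_num at hΦmass
  have hαinv : (0:ℝ) < α⁻¹ := inv_pos.2 hα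
  have hΦAI : IntegrableOn ΦA (Set.Ioi (0:ℝ)) := by
    have h1 : IntegrableOn (fun x => Φ (x * α⁻¹)) (Set.Ioi (0:ℝ)) := by
      refine (integrableOn_Ioi_comp_mul_right_iff Φ 0 hαinv).2 ?_
      simpa using hΦI
    have h2 : ΦA = fun x => (1/α) * Φ (x * α⁻¹) := by
      funext x; simp [hΦA, div_eq_mul_inv]
    rw [h2]
    exact h1.const_mul _
  have hΦAnn : ∀ x : ℝ, 0 ≤ x → 0 ≤ ΦA x := by
    intro x hx
    exact mul_nonneg (by positivity) (hΦnonneg _ (div_nonneg hx hα.le))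
  have hΦAanti : AntitoneOn ΦA (Set.Ici (0:ℝ)) := by
    intro x hx z hz hxz
    show (1/α) * Φ (z/α) ≤ (1/α) * Φ (x/α)
    apply mul_le_mul_of_nonneg_left _ (by positivity)
    exact hΦmono (x/α) (z/α) (div_nonneg hx hα.le) (by gcongr)
  have hint : ∀ k : ℕ, IntervalIntegrable ΦA volume ((k:ℝ)*Δz) (((k:ℝ)+1)*Δz) := by
    intro k
    apply AntitoneOn.intervalIntegrable
    apply hΦAanti.mono
    rw [Set.uIcc_of_le (by nlinarith [Nat.cast_nonneg (α := ℝ) k] : (k:ℝ)*Δz ≤ ((k:ℝ)+1)*Δz)]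
    intro x hx
    have : 0 ≤ (k:ℝ)*Δz := by positivity
    exact le_trans this hx.1
  have hInn : ∀ k, 0 ≤ I k := by
    intro k
    rw [hI k]
    apply intervalIntegral.integral_nonneg (by nlinarith [Nat.cast_nonneg (α := ℝ) k])
    intro u hu
    have h0 : 0 ≤ (k:ℝ)*Δz := by positivity
    exact hΦAnn u (le_trans h0 hu.1)
  have hIanti : ∀ k, I (k+1) ≤ I k := by
    intro k
    rw [hI k, hI (k+1)]
    push_cast
    have hshift : (∫ ζ in ((k:ℝ)+1)*Δz..(((k:ℝ)+1)+1)*Δz, ΦA ζ)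
        = ∫ ζ in (k:ℝ)*Δz..((k:ℝ)+1)*Δz, ΦA (ζ + Δz) := by
      rw [intervalIntegral.integral_comp_add_right]
      congr 1 <;> ring
    calc (∫ ζ in ((k:ℝ)+1)*Δz..(((k:ℝ)+1)+1)*Δz, (1/α) * Φ (ζ/α))
        = ∫ ζ in (k:ℝ)*Δz..((k:ℝ)+1)*Δz, ΦA (ζ + Δz) := hshift
      _ ≤ ∫ ζ in (k:ℝ)*Δz..((k:ℝ)+1)*Δz, ΦA ζ := by
          apply intervalIntegral.integral_mono_on
            (by nlinarith [Nat.cast_nonneg (α := ℝ) k])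
          · apply AntitoneOn.intervalIntegrable
            rw [Set.uIcc_of_le (by nlinarith [Nat.cast_nonneg (α := ℝ) k] :
              (k:ℝ)*Δz ≤ ((k:ℝ)+1)*Δz)]
            intro u hu v hv huv
            have hu0 : (0:ℝ) ≤ u + Δz := by
              have : 0 ≤ (k:ℝ)*Δz := by positivity
              linarith [hu.1]
            have hv0 : (0:ℝ) ≤ v + Δz := by
              have : 0 ≤ (k:ℝ)*Δz := by positivity
              linarith [hv.1]
            exact hΦAanti (Set.mem_Ici.2 hu0) (Set.mem_Ici.2 hv0) (by linarith)
          · exact hint k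
          · intro x hx
            have hx0 : 0 ≤ x := le_trans (by positivity) hx.1
            exact hΦAanti (Set.mem_Ici.2 hx0) (Set.mem_Ici.2 (by linarith)) (by linarith)
      _ = ∫ ζ in (k:ℝ)*Δz..((k:ℝ)+1)*Δz, (1/α) * Φ (ζ/α) := rfl
  have hΦAmass : ∫ x in Set.Ioi (0:ℝ), ΦA x = 1 := by
    have h1 := integral_comp_mul_right_Ioi Φ 0 hαinv
    simp only [zero_mul, inv_inv, smul_eq_mul, hΦmass, mul_one] at h1
    calc ∫ x in Set.Ioi (0:ℝ), ΦA x = ∫ x in Set.Ioi (0:ℝ), (1/α) * Φ (x * α⁻¹) := by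
          apply setIntegral_congr_fun measurableSet_Ioi
          intro x _
          simp [hΦA, div_eq_mul_inv]
      _ = (1/α) * ∫ x in Set.Ioi (0:ℝ), Φ (x * α⁻¹) := by rw [integral_const_mul]
      _ = (1/α) * α := by rw [h1]
      _ = 1 := by field_simp
  have hpartial : ∀ n : ℕ, ∑ k ∈ Finset.range n, I k ≤ 1 := by
    intro n
    have hsum_eq : ∑ k ∈ Finset.range n, I k = ∫ ζ in (0:ℝ)..((n:ℝ)*Δz), ΦA ζ := by
      have hadj := intervalIntegral.sum_integral_adjacent_intervals
        (a := fun k : ℕ => (k:ℝ)*Δz) (μ := volume) (f := ΦA) (n := n)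
        (fun k _ => by push_cast; exact hint k)
      simp only [Nat.cast_zero, zero_mul] at hadj
      rw [← hadj]
      apply Finset.sum_congr rfl
      intro k _
      rw [hI k]
      push_cast
      rfl
    rw [hsum_eq, intervalIntegral.integral_of_le (by positivity)]
    calc (∫ ζ in Set.Ioc (0:ℝ) ((n:ℝ)*Δz), ΦA ζ) ≤ ∫ x in Set.Ioi (0:ℝ), ΦA x := by
          apply setIntegral_mono_set hΦAI
          · exact (ae_restrict_iff' measurableSet_Ioi).2
              (Filter.Eventually.of_forall fun x hx => hΦAnn x hx.le)
          · exact (Set.Ioc_subset_Ioi_self).eventuallyLE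
      _ = 1 := hΦAmass
  have hsum : Summable I := summable_of_sum_range_le hInn hpartial
  have hI0 : I 0 ≤ 1 := by
    have := hpartial 1
    simpa using this
  obtain ⟨M, hM⟩ := hy0B
  have hbddA : BddAbove (Set.range (y 0)) := by
    refine ⟨M, ?_⟩
    rintro _ ⟨j, rfl⟩
    exact (abs_le.1 (hM j)).2
  have hbddB : BddBelow (Set.range (y 0)) := by
    refine ⟨-M, ?_⟩
    rintro _ ⟨j, rfl⟩
    exact (abs_le.1 (hM j)).1
  have hlam0 : 0 ≤ lam := by rw [hlam]; positivity
  have hL0 : 0 ≤ L := le_trans (hW' 0).1 (hW' 0).2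
  have mvt : ∀ a b : ℝ, ∃ c, 0 ≤ c ∧ c ≤ L ∧ W b - W a = c * (b - a) := by
    intro a b
    rcases lt_trichotomy a b with h | h | h
    · obtain ⟨c, _, hc⟩ := exists_deriv_eq_slope W h hW.continuous.continuousOn
        hW.differentiableOn
      refine ⟨deriv W c, (hW' c).1, (hW' c).2, ?_⟩
      rw [hc, div_mul_cancel₀ _ (sub_ne_zero.2 h.ne')]
    · exact ⟨0, le_refl 0, hL0, by rw [h]; ring⟩
    · obtain ⟨c, _, hc⟩ := exists_deriv_eq_slope W h hW.continuous.continuousOn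
        hW.differentiableOn
      refine ⟨deriv W c, (hW' c).1, (hW' c).2, ?_⟩
      have hrw : (W a - W b)/(a - b) = (W b - W a)/(b - a) := by
        rw [← neg_sub (W b) (W a), ← neg_sub b a, neg_div_neg_eq]
      rw [hc, hrw, div_mul_cancel₀ _ (sub_ne_zero.2 h.ne)]
  intro n
  induction n with
  | zero => exact fun i => ⟨ciInf_le hbddB i, le_ciSup hbddA i⟩
  | succ n ih =>
    intro i
    obtain ⟨c, hc0, hcL, hcEq⟩ := mvt (discAvg I (y n) i) (discAvg I (y n) (i+1))
    have hd0 : 0 ≤ lam * c := mul_nonneg hlam0 hc0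
    have hd1 : lam * c ≤ 1 := le_trans (mul_le_mul_of_nonneg_left hcL hlam0) hCFL.2
    have hstep := step_bound I hInn hIanti hsum hI0 (lam*c) hd0 hd1 (y n)
      (⨅ j : ℤ, y 0 j) (⨆ j : ℤ, y 0 j) (fun j => (ih j).1) (fun j => (ih j).2) i
    have heq : y (n+1) i = y n i
        + (lam*c) * (discAvg I (y n) (i+1) - discAvg I (y n) i) := by
      rw [hyrec n i, hcEq]; ring
    rw [heq]
    exact hstep
end

section
/- Let W : ℝ → ℝ be differentiable with W'(σ) ≥ 0 for all σ, let η : ℝ → ℝ be twice continuously differentiable and convex, fix w₀ ∈ ℝ, and define Q(w) = ∫_{w₀}^{w} η'(σ) W'(σ) dσ. Define H(a,b) = ( η'(a) W(a) − Q(a) ) − ( η'(a) W(b) − Q(b) ). Then for all a, b ∈ ℝ: (i) H(a,b) = ∫_a^b ( η'(σ) − η'(a) ) W'(σ) dσ = ∫_a^b ( ∫_a^σ η''(μ) dμ ) W'(σ) dσ; (ii) H(a,b) ≥ 0; and (iii) if moreover η''(μ) W'(σ) ≥ 2c > 0 for all μ, σ ∈ ℝ, then H(a,b) ≥ c (b −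 a)². -/
open MeasureTheory intervalIntegral

/-!
Since `Q' = η' W'`, the fundamental theorem of calculus turns `H(a,b)` into
`∫_a^b (η'(σ) - η'(a)) W'(σ) dσ`. The integrand has the sign of `σ - a`, because `η'` is
non-decreasing and `W' ≥ 0`, so the oriented integral from `a` is non-negative. If
`η'' W' ≥ 2c`, then `μ ↦ η'(μ) W'(σ) - 2cμ` is non-decreasing for each fixed `σ`, so the
integrand lies above `2c(σ - a)` to the right of `a` and below it to the left; integrating
gives `H(a,b) ≥ c(b - a)²`.
-/

theorem intervalIntegral.integral_mono_of_le_right_of_ge_left {f g : ℝ → ℝ} {a b : ℝ}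
    (hf : IntervalIntegrable f volume a b) (hg : IntervalIntegrable g volume a b)
    (hright : ∀ σ, a ≤ σ → f σ ≤ g σ) (hleft : ∀ σ, σ ≤ a → g σ ≤ f σ) :
    ∫ σ in a..b, f σ ≤ ∫ σ in a..b, g σ := by
  rcases le_total a b with hab | hba
  · exact integral_mono_on hab hf hg fun σ hσ => hright σ hσ.1
  · rw [integral_symm b a, integral_symm b a, neg_le_neg_iff]
    exact integral_mono_on hba hg.symm hf.symm fun σ hσ => hleft σ hσ.2

theorem monotone_mul_sub_mul_of_le_deriv_mul {φ : ℝ → ℝ} (hφ : Differentiable ℝ φ)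
    {m w : ℝ} (h : ∀ μ, m ≤ deriv φ μ * w) : Monotone fun μ => φ μ * w - m * μ := by
  have hd : Differentiable ℝ fun μ => φ μ * w - m * μ := by fun_prop
  refine monotone_of_deriv_nonneg hd fun μ => ?_
  have hderiv : HasDerivAt (fun μ => φ μ * w - m * μ) (deriv φ μ * w - m * 1) μ :=
    ((hφ μ).hasDerivAt.mul_const w).sub ((hasDerivAt_id' μ).const_mul m)
  rw [hderiv.deriv]
  linarith [h μ]

theorem intervalIntegral.integral_sub_const_mul_deriv {p W : ℝ → ℝ} (hp : Continuous p)
    (hW : ContDiff ℝ 1 W) (k a b : ℝ) :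
    ∫ σ in a..b, (p σ - k) * deriv W σ = (∫ σ in a..b, p σ * deriv W σ) - k * (W b - W a) := by
  have hW'c : Continuous (deriv W) := hW.continuous_deriv le_rfl
  simp only [sub_mul]
  rw [integral_sub (f := fun σ => p σ * deriv W σ) ((hp.mul hW'c).intervalIntegrable a b)
      ((hW'c.intervalIntegrable a b).const_mul k), integral_const_mul,
    integral_deriv_eq_sub (fun x _ => hW.differentiable one_ne_zero x) (hW'c.intervalIntegrable a b)]

theorem intervalIntegral.integral_const_mul_sub (c a b : ℝ) :
    ∫ σ in a..b, c * (σ - a) = c * ((b - a) ^ 2 / 2) := by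
  rw [integral_const_mul, integral_comp_sub_right (fun x => x), integral_id]
  ring

/-- properties of the entropy dissipation integrand
`H(a,b) = (η'(a)W(a) − Q(a)) − (η'(a)W(b) − Q(b))` for an entropy/entropy-flux
pair `(η, Q)` with `Q' = η' W'` and a non-decreasing flux `W`:
(i) two integral representations of `H`; (ii) `H ≥ 0`; (iii) a quadratic lower
bound under uniform positivity of `η'' W'`. -/
theorem stmt_10
    (W : ℝ → ℝ) (hW : ContDiff ℝ 1 W) (hW' : ∀ σ : ℝ, 0 ≤ deriv W σ)
    (η : ℝ → ℝ) (hη : ContDiff ℝ 2 η) (hηconv : ConvexOn ℝ Set.univ η)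
    (w₀ : ℝ) (Q : ℝ → ℝ)
    (hQ : ∀ x : ℝ, Q x = ∫ σ in w₀..x, deriv η σ * deriv W σ)
    (H : ℝ → ℝ → ℝ)
    (hH : ∀ a b : ℝ, H a b = (deriv η a * W a - Q a) - (deriv η a * W b - Q b)) :
    ∀ a b : ℝ,
      (H a b = ∫ σ in a..b, (deriv η σ - deriv η a) * deriv W σ) ∧
      (H a b = ∫ σ in a..b, (∫ μ in a..σ, deriv (deriv η) μ) * deriv W σ) ∧
      0 ≤ H a b ∧
      (∀ c : ℝ, 0 < c → (∀ μ σ : ℝ, 2 * c ≤ deriv (deriv η) μ * deriv W σ) →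
        c * (b - a) ^ 2 ≤ H a b) := by
  intro a b
  have hη' : ContDiff ℝ 1 (deriv η) := hη.deriv'
  have hη'd : Differentiable ℝ (deriv η) := hη'.differentiable one_ne_zero
  have hη'c : Continuous (deriv η) := hη'.continuous
  have hWc : Continuous (deriv W) := hW.continuous_deriv le_rfl
  have hη'mono : Monotone (deriv η) := fun x y hxy =>
    hηconv.monotoneOn_deriv (fun z _ => hη.differentiable two_ne_zero z) trivial trivial hxy
  have hrep : H a b = ∫ σ in a..b, (deriv η σ - deriv η a) * deriv W σ := by
    rw [integral_sub_const_mul_deriv hη'c hW, hH, hQ a, hQ b,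
      ← integral_interval_sub_left (f := fun σ => deriv η σ * deriv W σ)
        ((hη'c.mul hWc).intervalIntegrable w₀ b) ((hη'c.mul hWc).intervalIntegrable w₀ a)]
    ring
  have hint : IntervalIntegrable (fun σ => (deriv η σ - deriv η a) * deriv W σ) volume a b :=
    ((hη'c.sub continuous_const).mul hWc).intervalIntegrable a b
  refine ⟨hrep, ?_, ?_, ?_⟩
  · rw [hrep]
    congr 1 with σ
    rw [integral_deriv_eq_sub (fun x _ => hη'd x)
      ((hη'.continuous_deriv le_rfl).intervalIntegrable a σ)]
  · rw [hrep, ← integral_zero (a := a) (b := b) (μ := volume)]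
    exact integral_mono_of_le_right_of_ge_left intervalIntegrable_const hint
      (fun σ hσ => mul_nonneg (sub_nonneg.2 (hη'mono hσ)) (hW' σ))
      (fun σ hσ => mul_nonpos_of_nonpos_of_nonneg (sub_nonpos.2 (hη'mono hσ)) (hW' σ))
  · intro c _ hc
    have hmono σ := monotone_mul_sub_mul_of_le_deriv_mul hη'd fun μ => hc μ σ
    calc c * (b - a) ^ 2 = ∫ σ in a..b, 2 * c * (σ - a) := by
          rw [integral_const_mul_sub]; ring
      _ ≤ H a b := by
        rw [hrep]
        refine integral_mono_of_le_right_of_ge_left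
          ((by fun_prop : Continuous fun σ : ℝ => 2 * c * (σ - a)).intervalIntegrable a b) hint
          (fun σ hσ => ?_) (fun σ hσ => ?_)
        · linarith [hmono σ hσ]
        · linarith [hmono σ hσ]
end
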